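/- arXiv:2303.08604 — 6 statements merged into one kernel-verified Lean document; each statement's English description precedes it below -/
import Mathlib

section
/- For each t = 0,…,T−1, the functions H*_t and V*_t are K_t-convex. -/
/-!
Backward induction, following Scarf. If `V_{t+1}` is `K_{t+1}`-convex, so is
`y ↦ E V_{t+1}(y - D_t)`, hence `H_t = C_t + α E V_{t+1}(· - D_t)` is `α K_{t+1}`-convex and so
`K_t`-convex. Being continuous and coercive, `H_t` has a global minimiser `S`, and the infimum
defining `V_t` is attained: `V_t x = min (H_t x) (K_t + H_t (max x S))`. The states `x ≤ S` with
`K_t + H_t S < H_t x`, where ordering strictly pays, form a down-set on which `V_t` is constant,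
and `V_t = H_t` off it; this gives the `K_t`-convexity of `V_t`. Continuity, a lower bound and
upper bounds on the half-lines `(-∞, c]` are carried along the induction so that the expectations
are finite and the minimum exists.
-/

open MeasureTheory Filter Set

/-- A function `g : ℝ → ℝ` is `K`-convex if for all `x ≤ y ≤ z` with
`y = τ·x + (1-τ)·z`, `0 ≤ τ ≤ 1`, one has `g y ≤ τ·g x + (1-τ)·(g z + K)`. -/
def KConvex (K : ℝ) (g : ℝ → ℝ) : Prop :=
  ∀ x y z τ : ℝ, 0 ≤ τ → τ ≤ 1 → x ≤ y → y ≤ z → y = τ * x + (1 - τ) * z →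
    g y ≤ τ * g x + (1 - τ) * (g z + K)

namespace KConvex

variable {K : ℝ} {g : ℝ → ℝ}

theorem nonneg (hg : KConvex K g) : 0 ≤ K := by
  simpa using hg 0 0 0 0 le_rfl zero_le_one le_rfl le_rfl (by ring)

theorem mono {K' : ℝ} (hg : KConvex K g) (h : K ≤ K') : KConvex K' g := by
  intro x y z τ h0 h1 hxy hyz he
  nlinarith [hg x y z τ h0 h1 hxy hyz he]

theorem add {K' : ℝ} {g' : ℝ → ℝ} (hg : KConvex K g) (hg' : KConvex K' g') :
    KConvex (K + K') (fun x => g x + g' x) := by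
  intro x y z τ h0 h1 hxy hyz he
  linarith [hg x y z τ h0 h1 hxy hyz he, hg' x y z τ h0 h1 hxy hyz he]

theorem const_mul (hg : KConvex K g) {a : ℝ} (ha : 0 ≤ a) :
    KConvex (a * K) (fun x => a * g x) := by
  intro x y z τ h0 h1 hxy hyz he
  nlinarith [hg x y z τ h0 h1 hxy hyz he]

/-- Clearing the denominators of the weights removes the degenerate case `a = b` from every use. -/
theorem mul_le (hg : KConvex K g) {a u b : ℝ} (hau : a ≤ u) (hub : u ≤ b) :
    (b - a) * g u ≤ (b - u) * g a + (u - a) * (g b + K) := by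
  rcases hau.eq_or_lt with rfl | hau'
  · simp
  have hab : 0 < b - a := by linarith
  have h := hg a u b ((b - u) / (b - a)) (div_nonneg (by linarith) hab.le)
    ((div_le_one hab).2 (by linarith)) hau hub (by field_simp; ring)
  have hτ : 1 - (b - u) / (b - a) = (u - a) / (b - a) := by field_simp; ring
  rw [hτ, div_mul_eq_mul_div, div_mul_eq_mul_div, ← add_div, le_div_iff₀ hab] at h
  linarith

theorem of_mul_le (hK : 0 ≤ K)
    (h : ∀ a u b, a ≤ u → u ≤ b → (b - a) * g u ≤ (b - u) * g a + (u - a) * (g b + K)) :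
    KConvex K g := by
  intro x y z τ h0 h1 hxy hyz he
  rcases (hxy.trans hyz).eq_or_lt with rfl | hxz
  · obtain rfl : y = x := le_antisymm hyz hxy
    nlinarith
  have := h x y z hxy hyz
  rw [show z - y = τ * (z - x) by rw [he]; ring, show y - x = (1 - τ) * (z - x) by rw [he]; ring]
    at this
  nlinarith

theorem le_max (hg : KConvex K g) {a u b : ℝ} (hau : a ≤ u) (hub : u ≤ b) :
    g u ≤ max (g a) (g b + K) := by
  rcases (hau.trans hub).eq_or_lt with rfl | hab
  · obtain rfl : u = a := le_antisymm hub hau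
    exact le_max_left _ _
  have h := hg.mul_le hau hub
  have := mul_le_mul_of_nonneg_left (le_max_left (g a) (g b + K)) (sub_nonneg.2 hub)
  have := mul_le_mul_of_nonneg_left (le_max_right (g a) (g b + K)) (sub_nonneg.2 hau)
  exact le_of_mul_le_mul_left (by linarith) (sub_pos.2 hab)

theorem le_add_of_forall_le (hg : KConvex K g) {S x y : ℝ} (hS : ∀ u, g S ≤ g u)
    (hSx : S ≤ x) (hxy : x ≤ y) : g x ≤ g y + K :=
  (hg.le_max hSx hxy).trans (max_le ((hS y).trans (by linarith [hg.nonneg])) le_rfl)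

end KConvex

theorem ConvexOn.kConvex {g : ℝ → ℝ} (hg : ConvexOn ℝ univ g) : KConvex 0 g := by
  intro x y z τ h0 h1 _ _ he
  have := hg.2 (mem_univ x) (mem_univ z) h0 (sub_nonneg.2 h1) (by ring)
  simp only [smul_eq_mul] at this
  rw [he]
  linarith

noncomputable def reorderValue (K : ℝ) (H : ℝ → ℝ) (x : ℝ) : ℝ :=
  sInf ((fun y => K * (if x < y then (1 : ℝ) else 0) + H y) '' Ici x)

section Scarf

variable {K S : ℝ} {H : ℝ → ℝ}

theorem reorderValue_eq_min (hH : KConvex K H) (hS : ∀ u, H S ≤ H u) (x : ℝ) :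
    reorderValue K H x = min (H x) (K + H (max x S)) := by
  refine IsLeast.csInf_eq ⟨?_, ?_⟩
  · rcases lt_or_ge x S with hxS | hSx
    · rw [max_eq_right hxS.le]
      rcases min_choice (H x) (K + H S) with h | h <;> rw [h]
      · exact ⟨x, self_mem_Ici, by simp⟩
      · exact ⟨S, hxS.le, by simp [hxS]⟩
    · rw [max_eq_left hSx, min_eq_left (by linarith [hH.nonneg])]
      exact ⟨x, self_mem_Ici, by simp⟩
  · rintro _ ⟨y, hxy, rfl⟩
    rcases (mem_Ici.1 hxy).eq_or_lt with rfl | hxy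
    · simp
    simp only [hxy, if_true, mul_one]
    rcases le_total x S with hxS | hSx
    · rw [max_eq_right hxS]
      exact (min_le_right _ _).trans (by linarith [hS y])
    · exact (min_le_left _ _).trans (by linarith [hH.le_add_of_forall_le hS hSx hxy.le])

theorem kConvex_min_max (hH : KConvex K H) (hS : ∀ u, H S ≤ H u) :
    KConvex K (fun x => min (H x) (K + H (max x S))) := by
  set B := {x | x ≤ S ∧ K + H S < H x}
  have hB_down : ∀ {x y}, x ≤ y → y ∈ B → x ∈ B := fun hxy ⟨hyS, hy⟩ =>
    ⟨hxy.trans hyS, by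
      have := hH.le_max hxy hyS
      rcases le_max_iff.1 this with h | h <;> linarith⟩
  have hW_mem : ∀ x ∈ B, min (H x) (K + H (max x S)) = K + H S := fun x ⟨hxS, hx⟩ => by
    rw [max_eq_right hxS, min_eq_right hx.le]
  have hW_not_mem : ∀ x ∉ B, min (H x) (K + H (max x S)) = H x := fun x hx => by
    rcases le_total x S with hxS | hSx
    · rw [max_eq_right hxS, min_eq_left (not_lt.1 fun h => hx ⟨hxS, h⟩)]
    · rw [max_eq_left hSx, min_eq_left (by linarith [hH.nonneg])]
  have hW_ge : ∀ z, H S ≤ min (H z) (K + H (max z S)) := fun z =>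
    le_min (hS z) (by linarith [hS (max z S), hH.nonneg])
  refine KConvex.of_mul_le hH.nonneg fun x y z hxy hyz => ?_
  by_cases hy : y ∈ B
  · rw [hW_mem y hy, hW_mem x (hB_down hxy hy)]
    linarith [mul_le_mul_of_nonneg_left (hW_ge z) (sub_nonneg.2 hxy)]
  have hz : z ∉ B := fun hz => hy (hB_down hyz hz)
  rw [hW_not_mem y hy, hW_not_mem z hz]
  by_cases hx : x ∈ B
  · rw [hW_mem x hx]
    rcases le_total y S with hyS | hSy
    · have hHy : H y ≤ K + H S := not_lt.1 fun h => hy ⟨hyS, h⟩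
      linarith [mul_le_mul_of_nonneg_left hHy (sub_nonneg.2 (hxy.trans hyz)),
        mul_le_mul_of_nonneg_left (hS z) (sub_nonneg.2 hxy),
        mul_nonneg (sub_nonneg.2 hxy) hH.nonneg]
    · have := mul_le_mul_of_nonneg_left (hH.le_add_of_forall_le hS hSy hyz) (sub_nonneg.2 hx.1)
      linarith [hH.mul_le hSy hyz, mul_nonneg (sub_nonneg.2 hyz) hH.nonneg]
  · rw [hW_not_mem x hx]
    exact hH.mul_le hxy hyz

end Scarf

/-- The properties of the value functions that propagate through the recursion: besides
`K`-convexity, those making the expectation finite and continuous and the minimum attained. -/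
structure IsRegularKConvex (K : ℝ) (V : ℝ → ℝ) : Prop where
  continuous : Continuous V
  kConvex : KConvex K V
  bddBelow : BddBelow (range V)
  bddAbove_Iic : ∀ c, BddAbove (V '' Iic c)

theorem isRegularKConvex_const (c : ℝ) : IsRegularKConvex 0 (fun _ => c) :=
  ⟨continuous_const, (convexOn_const c convex_univ).kConvex, ⟨c, by simp⟩,
    fun _ => ⟨c, by simp⟩⟩

theorem isRegularKConvex_reorderValue {K : ℝ} {H : ℝ → ℝ} (hHc : Continuous H)
    (hHk : KConvex K H) (hH : Tendsto H (cocompact ℝ) atTop) :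
    IsRegularKConvex K (reorderValue K H) := by
  obtain ⟨S, hS⟩ := hHc.exists_forall_le hH
  rw [show reorderValue K H = _ from funext (reorderValue_eq_min hHk hS)]
  refine ⟨by fun_prop, kConvex_min_max hHk hS,
    ⟨H S, forall_mem_range.2 fun x => le_min (hS x) ?_⟩,
    fun c => ⟨K + max (H S) (H (max c S) + K), forall_mem_image.2 fun x hx => ?_⟩⟩
  · linarith [hS (max x S), hHk.nonneg]
  · exact (min_le_right _ _).trans <| add_le_add_right
      (hHk.le_max (le_max_right x S) (max_le_max_right S (mem_Iic.1 hx))) K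

theorem IsRegularKConvex.integral_sub {K : ℝ} {V : ℝ → ℝ} (hV : IsRegularKConvex K V)
    (μ : Measure ℝ) [IsProbabilityMeasure μ] (hμ : μ (Iio 0) = 0) :
    IsRegularKConvex K (fun y => ∫ ξ, V (y - ξ) ∂μ) := by
  have hae : ∀ᵐ ξ ∂μ, 0 ≤ ξ := ae_iff.2 (by simp only [not_le]; exact hμ)
  obtain ⟨L, hL⟩ := hV.bddBelow
  -- nonnegative demand keeps `y - ξ` in the half-line `Iic y`, where `V` is bounded
  have hbound : ∀ c, ∃ B, ∀ y ≤ c, ∀ᵐ ξ ∂μ, ‖V (y - ξ)‖ ≤ B := fun c => by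
    obtain ⟨M, hM⟩ := hV.bddAbove_Iic c
    exact ⟨max |L| |M|, fun y hy => hae.mono fun ξ hξ => abs_le_max_abs_abs
      (hL (mem_range_self _)) (hM (mem_image_of_mem V (by simp only [mem_Iic]; linarith)))⟩
  have hmeas : ∀ y, AEStronglyMeasurable (fun ξ => V (y - ξ)) μ := fun y =>
    (hV.continuous.comp (continuous_sub_left y)).aestronglyMeasurable
  have hint : ∀ y, Integrable (fun ξ => V (y - ξ)) μ := fun y => by
    obtain ⟨B, hB⟩ := hbound y
    exact (integrable_const B).mono' (hmeas y) (hB y le_rfl)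
  refine ⟨continuous_iff_continuousAt.2 fun y₀ => ?_, ?_, ⟨L, forall_mem_range.2 fun y => ?_⟩,
    fun c => ?_⟩
  · obtain ⟨B, hB⟩ := hbound (y₀ + 1)
    exact continuousAt_of_dominated (Eventually.of_forall hmeas)
      ((eventually_lt_nhds (lt_add_one y₀)).mono fun y hy => hB y hy.le) (integrable_const B)
      (Eventually.of_forall fun ξ => (hV.continuous.comp (continuous_sub_right ξ)).continuousAt)
  · intro x y z τ h0 h1 hxy hyz he
    have hτx := (hint x).const_mul τ
    have hτz : Integrable (fun ξ => (1 - τ) * (V (z - ξ) + K)) μ :=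
      ((hint z).add (integrable_const K)).const_mul (1 - τ)
    have := integral_mono (hint y) (hτx.add hτz) fun ξ => hV.kConvex (x - ξ) (y - ξ) (z - ξ) τ
      h0 h1 (by linarith) (by linarith) (by rw [he]; ring)
    simp only [Pi.add_apply] at this
    rwa [integral_add hτx hτz, integral_const_mul, integral_const_mul,
      integral_add (hint z) (integrable_const K), integral_const, probReal_univ, one_smul] at this
  · simpa using integral_mono (integrable_const L) (hint y) fun ξ => hL (mem_range_self _)
  · obtain ⟨M, hM⟩ := hV.bddAbove_Iic c
    refine ⟨M, forall_mem_image.2 fun y hy => ?_⟩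
    simpa using integral_mono_ae (hint y) (integrable_const M) (hae.mono fun ξ hξ =>
      hM (mem_image_of_mem V (by simp only [mem_Iic] at hy ⊢; linarith)))

theorem bellman_step (μ : Measure ℝ) [IsProbabilityMeasure μ] (hμ : μ (Iio 0) = 0)
    {α K κ : ℝ} (hα : 0 ≤ α) (hκ : α * κ ≤ K) {C V : ℝ → ℝ} (hCconv : ConvexOn ℝ univ C)
    (hCcoer : Tendsto C (cocompact ℝ) atTop) (hV : IsRegularKConvex κ V) :
    KConvex K (fun y => C y + α * ∫ ξ, V (y - ξ) ∂μ) ∧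
      IsRegularKConvex K (reorderValue K (fun y => C y + α * ∫ ξ, V (y - ξ) ∂μ)) := by
  obtain ⟨hGc, hGk, ⟨L, hL⟩, -⟩ := hV.integral_sub μ hμ
  have hHk : KConvex K (fun y => C y + α * ∫ ξ, V (y - ξ) ∂μ) :=
    (hCconv.kConvex.add (hGk.const_mul hα)).mono (by simpa using hκ)
  have hHc : Continuous (fun y => C y + α * ∫ ξ, V (y - ξ) ∂μ) :=
    (continuousOn_univ.1 (hCconv.continuousOn isOpen_univ)).add (continuous_const.mul hGc)
  have hHcoer : Tendsto (fun y => C y + α * ∫ ξ, V (y - ξ) ∂μ) (cocompact ℝ) atTop :=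
    tendsto_atTop_add_right_of_le _ (α * L) hCcoer fun y =>
      mul_le_mul_of_nonneg_left (hL (mem_range_self y)) hα
  exact ⟨hHk, isRegularKConvex_reorderValue hHc hHk hHcoer⟩

theorem stmt0_general
    (T : ℕ)
    (α : ℝ) (hα0 : 0 < α)
    (K : ℕ → ℝ) (hK0 : ∀ t, t < T → 0 ≤ K t)
    (hKmono : ∀ t, t + 2 ≤ T → α * K (t + 1) ≤ K t)
    (ν : ℕ → MeasureTheory.Measure ℝ)
    (hprob : ∀ t, MeasureTheory.IsProbabilityMeasure (ν t))
    (hpos : ∀ t, ν t (Set.Iio 0) = 0)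
    (C : ℕ → ℝ → ℝ)
    (hCconv : ∀ t, t < T → ConvexOn ℝ Set.univ (C t))
    (hCcoer : ∀ t, t < T → Filter.Tendsto (C t) (Filter.cocompact ℝ) Filter.atTop)
    (Hstar Vstar : ℕ → ℝ → ℝ)
    (hVstarT : ∀ x, Vstar T x = 0)
    (hHstar : ∀ t, t < T → ∀ y,
      Hstar t y = C t y + α * ∫ ξ, Vstar (t + 1) (y - ξ) ∂(ν t))
    (hVstar : ∀ t, t < T → ∀ x,
      Vstar t x = sInf ((fun y => K t * (if x < y then (1 : ℝ) else 0) + Hstar t y) '' Set.Ici x))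
    :
    ∀ t, t < T → KConvex (K t) (Hstar t) ∧ KConvex (K t) (Vstar t) := by
  have step : ∀ t < T, ∀ κ, α * κ ≤ K t → IsRegularKConvex κ (Vstar (t + 1)) →
      KConvex (K t) (Hstar t) ∧ IsRegularKConvex (K t) (Vstar t) := fun t ht κ hκ hV => by
    rw [funext (hVstar t ht), funext (hHstar t ht)]
    exact bellman_step (ν t) (hpos t) hα0.le hκ (hCconv t ht) (hCcoer t ht) hV
  have from_end : ∀ d t, t + d + 1 = T →
      KConvex (K t) (Hstar t) ∧ IsRegularKConvex (K t) (Vstar t) := by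
    intro d
    induction d with
    | zero =>
      intro t h
      refine step t (by omega) 0 (by simpa using hK0 t (by omega)) ?_
      rw [show t + 1 = T by omega, funext hVstarT]
      exact isRegularKConvex_const 0
    | succ d ih =>
      intro t h
      exact step t (by omega) _ (hKmono t (by omega)) (ih (t + 1) (by omega)).2
  intro t ht
  obtain ⟨hH, hV⟩ := from_end (T - t - 1) t (by omega)
  exact ⟨hH, hV.kConvex⟩

theorem stmt0
    (T : ℕ) (hT : 2 ≤ T)
    (α : ℝ) (hα0 : 0 < α) (hα1 : α ≤ 1)
    (K : ℕ → ℝ) (hK0 : ∀ t, t < T → 0 ≤ K t)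
    (hKmono : ∀ t, t + 2 ≤ T → α * K (t + 1) ≤ K t)
    (ν : ℕ → MeasureTheory.Measure ℝ)
    (hprob : ∀ t, MeasureTheory.IsProbabilityMeasure (ν t))
    (hpos : ∀ t, ν t (Set.Iio 0) = 0)
    (F : ℕ → ℝ → ℝ) (hF : ∀ t x, F t x = (ν t (Set.Iic x)).toReal)
    (C : ℕ → ℝ → ℝ)
    (hCconv : ∀ t, t < T → ConvexOn ℝ Set.univ (C t))
    (hCcoer : ∀ t, t < T → Filter.Tendsto (C t) (Filter.cocompact ℝ) Filter.atTop)
    (Hstar Vstar : ℕ → ℝ → ℝ)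
    (hVstarT : ∀ x, Vstar T x = 0)
    (hHstar : ∀ t, t < T → ∀ y,
      Hstar t y = C t y + α * ∫ ξ, Vstar (t + 1) (y - ξ) ∂(ν t))
    (hVstar : ∀ t, t < T → ∀ x,
      Vstar t x = sInf ((fun y => K t * (if x < y then (1 : ℝ) else 0) + Hstar t y) '' Set.Ici x))
    :
    ∀ t, t < T → KConvex (K t) (Hstar t) ∧ KConvex (K t) (Vstar t) :=
  stmt0_general T α hα0 K hK0 hKmono ν hprob hpos C hCconv hCcoer Hstar Vstar hVstarT hHstar hVstar
end

section
/- For every t = 0,…,T−2 and every grid point z_m ∈ Z_θ with z_m ≤ I_t, one has H_t(z_m) ≥ H_t(I_t). -/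
open Set

/-!
Below `I t` the recursion for `H t` only evaluates `V (t + 1)` at points `y - z_n ≤ I t + θ`, which lie
strictly below `Ibar (t + 1) ≤ s (t + 1)`, where `V (t + 1)` is constant. Hence on that range `H t`
differs from `C t` by a constant, and `C t` is antitone left of its minimiser `Cm t > I t`.
-/

theorem ConvexOn.le_of_le_of_le_of_forall_le {𝕜 β : Type*} [Field 𝕜] [LinearOrder 𝕜]
    [IsStrictOrderedRing 𝕜] [AddCommGroup β] [LinearOrder β] [IsOrderedAddMonoid β] [Module 𝕜 β]
    [PosSMulStrictMono 𝕜 β] {f : 𝕜 → β} {x y c : 𝕜} (hf : ConvexOn 𝕜 univ f) (hc : ∀ z, f c ≤ f z)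
    (hxy : x ≤ y) (hyc : y ≤ c) : f y ≤ f x := by
  have hy : y ∈ segment 𝕜 x c := by
    rw [segment_eq_Icc (hxy.trans hyc)]
    exact ⟨hxy, hyc⟩
  simpa [max_eq_left (hc x)] using hf.le_on_segment (mem_univ x) (mem_univ c) hy

theorem intCast_mul_add_le_of_lt {θ : ℝ} (hθ : 0 < θ) {m n : ℤ} (h : (m : ℝ) * θ < n * θ) :
    (m : ℝ) * θ + θ ≤ n * θ := by
  have hmn : m < n := by exact_mod_cast lt_of_mul_lt_mul_right h hθ.le
  have : (m : ℝ) + 1 ≤ n := by exact_mod_cast hmn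
  nlinarith

theorem tsum_comp_sub_eq_of_forall_lt {w : ℕ → ℝ} {g : ℝ → ℝ} {θ s c y : ℝ} (hθ : 0 ≤ θ)
    (hg : ∀ x < s, g x = c) (hy : y + θ < s) :
    ∑' n : ℕ, g (y - ((n : ℝ) - 1) * θ) * w n = ∑' n : ℕ, c * w n := by
  refine tsum_congr fun n => ?_
  rw [hg]
  nlinarith [mul_nonneg (Nat.cast_nonneg n : (0 : ℝ) ≤ n) hθ]

theorem ibar_le_s {θ K Ib Iv S s : ℝ} {c : ℝ → ℝ} (hθ : 0 < θ) (hK : 0 ≤ K)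
    (hIb : ∃ m : ℤ, Ib - θ = m * θ) (hIv : ∃ m : ℤ, Iv = m * θ) (hIbIv : Ib - θ ≤ Iv)
    (hjump : c Iv + K < c (Ib - θ)) (hIvS : Iv ≤ S) (hs0 : K = 0 → s = S)
    (hs1 : 0 < K → Ib ≤ s) : Ib ≤ s := by
  rcases hK.lt_or_eq with hKpos | hKzero
  · exact hs1 hKpos
  obtain ⟨mb, hmb⟩ := hIb
  obtain ⟨mv, rfl⟩ := hIv
  have hlt : Ib - θ < mv * θ := hIbIv.lt_of_ne fun h => by rw [h] at hjump; linarith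
  have := intCast_mul_add_le_of_lt hθ (hmb ▸ hlt)
  rw [hs0 hKzero.symm]
  linarith

theorem stmt3_general
    (T : ℕ)
    (α : ℝ)
    (K : ℕ → ℝ) (hK0 : ∀ t, t < T → 0 ≤ K t)
    (C : ℕ → ℝ → ℝ)
    (hCconv : ∀ t, t < T → ConvexOn ℝ Set.univ (C t))
    (θ : ℝ) (hθ : 0 < θ)
    (f : ℕ → ℤ → ℝ)
    (Cm SU : ℕ → ℝ)
    (hCm : ∀ t, t < T → IsLeast {x | ∀ y, C t x ≤ C t y} (Cm t))
    (s S : ℕ → ℝ) (I Ibar : ℕ → ℝ)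
    (hIbarT1 : Ibar (T - 1) = s (T - 1))
    (hI : ∀ t, t + 2 ≤ T →
      IsGreatest {w | (∃ m : ℤ, w = (m : ℝ) * θ) ∧ w < min (Ibar (t + 1) - θ) (Cm t)} (I t))
    (hIbar : ∀ t, t + 2 ≤ T →
      IsGreatest {w | (∃ m : ℤ, w = (m : ℝ) * θ) ∧ w ≤ I t ∧ C t (I t) + K t < C t w} (Ibar t - θ))
    (H V : ℕ → ℝ → ℝ)
    (hV : ∀ t, t < T → ∀ y, V t y = if y < s t then H t (S t) + K t else H t y)
    (hHrec : ∀ t, t + 2 ≤ T → ∀ y,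
      H t y = C t y + α * ∑' n : ℕ, V (t + 1) (y - ((n : ℝ) - 1) * θ) * f t ((n : ℤ) - 1))
    (hSdef : ∀ t, t + 2 ≤ T →
      IsGreatest {w | (∃ m : ℤ, w = (m : ℝ) * θ) ∧ I t ≤ w ∧ w ≤ SU t ∧
        ∀ u, (∃ n : ℤ, u = (n : ℝ) * θ) → I t ≤ u → u ≤ SU t → H t w ≤ H t u} (S t))
    (hsdef0 : ∀ t, t + 2 ≤ T → K t = 0 → s t = S t)
    (hsdef1 : ∀ t, t + 2 ≤ T → 0 < K t →
      IsLeast {w | (∃ m : ℤ, w = (m : ℝ) * θ) ∧ Ibar t ≤ w ∧ w ≤ S t ∧ H t w ≤ H t (S t) + K t} (s t))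
    :
    ∀ t, t + 2 ≤ T → ∀ m : ℤ, (m : ℝ) * θ ≤ I t → H t (I t) ≤ H t ((m : ℝ) * θ) := by
  intro t ht m hm
  have hIlt : I t < min (Ibar (t + 1) - θ) (Cm t) := (hI t ht).1.2
  have hIlt₁ : I t < Ibar (t + 1) - θ := hIlt.trans_le (min_le_left _ _)
  have hIlt₂ : I t < Cm t := hIlt.trans_le (min_le_right _ _)
  have hIbs : Ibar (t + 1) ≤ s (t + 1) := by
    rcases ht.eq_or_lt with hlast | hnext
    · simpa [← hlast] using hIbarT1.le
    obtain ⟨⟨hIbgrid, hIbI, hjump⟩, -⟩ := hIbar (t + 1) hnext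
    exact ibar_le_s hθ (hK0 _ (by omega)) hIbgrid (hI _ hnext).1.1 hIbI hjump
      (hSdef _ hnext).1.2.1 (hsdef0 _ hnext) fun hK => (hsdef1 _ hnext hK).1.2.1
  have hVconst : ∀ x < s (t + 1), V (t + 1) x = H (t + 1) (S (t + 1)) + K (t + 1) :=
      fun x hx => by rw [hV _ (by omega), if_pos hx]
  have hHshift : ∀ y ≤ I t, H t y = C t y + α * ∑' n : ℕ,
      (H (t + 1) (S (t + 1)) + K (t + 1)) * f t ((n : ℤ) - 1) := fun y hy => by
    rw [hHrec t ht, tsum_comp_sub_eq_of_forall_lt hθ.le hVconst (by linarith)]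
  have hCle : C t (I t) ≤ C t (m * θ) :=
    (hCconv t (by omega)).le_of_le_of_le_of_forall_le (hCm t (by omega)).1 hm hIlt₂.le
  rw [hHshift _ le_rfl, hHshift _ hm]
  linarith

theorem stmt3
    (T : ℕ) (hT : 2 ≤ T)
    (α : ℝ) (hα0 : 0 < α) (hα1 : α ≤ 1)
    (K : ℕ → ℝ) (hK0 : ∀ t, t < T → 0 ≤ K t)
    (hKmono : ∀ t, t + 2 ≤ T → α * K (t + 1) ≤ K t)
    (ν : ℕ → MeasureTheory.Measure ℝ)
    (hprob : ∀ t, MeasureTheory.IsProbabilityMeasure (ν t))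
    (hpos : ∀ t, ν t (Set.Iio 0) = 0)
    (F : ℕ → ℝ → ℝ) (hF : ∀ t x, F t x = (ν t (Set.Iic x)).toReal)
    (C : ℕ → ℝ → ℝ)
    (hCconv : ∀ t, t < T → ConvexOn ℝ Set.univ (C t))
    (hCcoer : ∀ t, t < T → Filter.Tendsto (C t) (Filter.cocompact ℝ) Filter.atTop)
    (θ : ℝ) (hθ : 0 < θ)
    (f : ℕ → ℤ → ℝ)
    (hf : ∀ t (n : ℤ), f t n = F t (((n : ℝ) + 1) * θ) - F t ((n : ℝ) * θ))
    (Cm SU : ℕ → ℝ)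
    (hCm : ∀ t, t < T → IsLeast {x | ∀ y, C t x ≤ C t y} (Cm t))
    (hSU : ∀ t, t < T → ∀ n0 : ℤ, (n0 : ℝ) * θ < Cm t → Cm t ≤ ((n0 : ℝ) + 1) * θ →
      IsLeast {w | (∃ m : ℤ, w = (m : ℝ) * θ) ∧ Cm t ≤ w ∧ C t ((n0 : ℝ) * θ) + K t < C t w} (SU t))
    (s S : ℕ → ℝ) (I Ibar : ℕ → ℝ)
    (hsT1a : s (T - 1) ≤ Cm (T - 1))
    (hsT1b : C (T - 1) (s (T - 1)) = C (T - 1) (Cm (T - 1)) + K (T - 1))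
    (hIbarT1 : Ibar (T - 1) = s (T - 1))
    (hI : ∀ t, t + 2 ≤ T →
      IsGreatest {w | (∃ m : ℤ, w = (m : ℝ) * θ) ∧ w < min (Ibar (t + 1) - θ) (Cm t)} (I t))
    (hIbar : ∀ t, t + 2 ≤ T →
      IsGreatest {w | (∃ m : ℤ, w = (m : ℝ) * θ) ∧ w ≤ I t ∧ C t (I t) + K t < C t w} (Ibar t - θ))
    (H V : ℕ → ℝ → ℝ)
    (hHT1 : ∀ y, H (T - 1) y = C (T - 1) y)
    (hST1 : S (T - 1) = Cm (T - 1))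
    (hV : ∀ t, t < T → ∀ y, V t y = if y < s t then H t (S t) + K t else H t y)
    (hHrec : ∀ t, t + 2 ≤ T → ∀ y,
      H t y = C t y + α * ∑' n : ℕ, V (t + 1) (y - ((n : ℝ) - 1) * θ) * f t ((n : ℤ) - 1))
    (hSdef : ∀ t, t + 2 ≤ T →
      IsGreatest {w | (∃ m : ℤ, w = (m : ℝ) * θ) ∧ I t ≤ w ∧ w ≤ SU t ∧
        ∀ u, (∃ n : ℤ, u = (n : ℝ) * θ) → I t ≤ u → u ≤ SU t → H t w ≤ H t u} (S t))
    (hsdef0 : ∀ t, t + 2 ≤ T → K t = 0 → s t = S t)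
    (hsdef1 : ∀ t, t + 2 ≤ T → 0 < K t →
      IsLeast {w | (∃ m : ℤ, w = (m : ℝ) * θ) ∧ Ibar t ≤ w ∧ w ≤ S t ∧ H t w ≤ H t (S t) + K t} (s t))
    :
    ∀ t, t + 2 ≤ T → ∀ m : ℤ, (m : ℝ) * θ ≤ I t → H t (I t) ≤ H t ((m : ℝ) * θ) :=
  stmt3_general T α K hK0 C hCconv θ hθ f Cm SU hCm s S I Ibar hIbarT1 hI hIbar H V hV hHrec hSdef
    hsdef0 hsdef1
end

section
/- For each t = 0,…,T−1, the functions H_t and V_t are sub-K_t-convex. -/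
open MeasureTheory Filter Set

/-- A function `g : ℝ → ℝ` is sub-`K`-convex (w.r.t. the grid `Z_θ = {m·θ : m ∈ ℤ}`)
if for all `x ≤ y ≤ z` with `z = m·θ` a grid point and `y = τ·x + (1-τ)·z`,
`0 ≤ τ ≤ 1`, one has `g y ≤ τ·g x + (1-τ)·(g z + K)`. -/
def SubKConvex (θ K : ℝ) (g : ℝ → ℝ) : Prop :=
  ∀ (x y : ℝ) (m : ℤ) (τ : ℝ), 0 ≤ τ → τ ≤ 1 → x ≤ y → y ≤ (m : ℝ) * θ →
    y = τ * x + (1 - τ) * ((m : ℝ) * θ) →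
    g y ≤ τ * g x + (1 - τ) * (g ((m : ℝ) * θ) + K)

private lemma cvx_combo {g : ℝ → ℝ} (h : ConvexOn ℝ Set.univ g) {a y b τ : ℝ}
    (h0 : 0 ≤ τ) (h1 : τ ≤ 1) (hy : y = τ * a + (1 - τ) * b) :
    g y ≤ τ * g a + (1 - τ) * g b := by
  have := h.2 (Set.mem_univ a) (Set.mem_univ b) h0 (show (0:ℝ) ≤ 1 - τ by linarith)
    (show τ + (1 - τ) = 1 by ring)
  simpa [smul_eq_mul, ← hy] using this

private lemma cvx_min_left {g : ℝ → ℝ} (h : ConvexOn ℝ Set.univ g) {c : ℝ}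
    (hc : ∀ y, g c ≤ g y) {a b : ℝ} (hab : a ≤ b) (hbc : b ≤ c) : g b ≤ g a := by
  have hseg : b ∈ segment ℝ a c := by
    rw [segment_eq_Icc (hab.trans hbc)]; exact ⟨hab, hbc⟩
  exact (h.le_on_segment (Set.mem_univ a) (Set.mem_univ c) hseg).trans (max_le le_rfl (hc a))

private lemma cvx_min_right {g : ℝ → ℝ} (h : ConvexOn ℝ Set.univ g) {c : ℝ}
    (hc : ∀ y, g c ≤ g y) {a b : ℝ} (hca : c ≤ a) (hab : a ≤ b) : g a ≤ g b := by
  have hseg : a ∈ segment ℝ c b := by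
    rw [segment_eq_Icc (hca.trans hab)]; exact ⟨hca, hab⟩
  exact (h.le_on_segment (Set.mem_univ c) (Set.mem_univ b) hseg).trans (max_le (hc b) le_rfl)

private lemma combo_exists {a y b : ℝ} (h1 : a ≤ y) (h2 : y ≤ b) (hab : a < b) :
    ∃ τ : ℝ, 0 ≤ τ ∧ τ ≤ 1 ∧ y = τ * a + (1 - τ) * b ∧ τ * (b - a) = b - y := by
  have hne : b - a ≠ 0 := by linarith
  refine ⟨(b - y) / (b - a), div_nonneg (by linarith) (by linarith),
    (div_le_one (by linarith)).mpr (by linarith), ?_, ?_⟩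
  · field_simp; ring
  · field_simp

private lemma subK_combo {θ K : ℝ} {g : ℝ → ℝ} (h : SubKConvex θ K g) (m : ℤ) {a y : ℝ}
    (h1 : a ≤ y) (h2 : y ≤ (m : ℝ) * θ) :
    ∃ τ : ℝ, 0 ≤ τ ∧ τ ≤ 1 ∧ τ * ((m : ℝ) * θ - a) = (m : ℝ) * θ - y ∧
      g y ≤ τ * g a + (1 - τ) * (g ((m : ℝ) * θ) + K) := by
  rcases eq_or_lt_of_le (h1.trans h2) with heq | hlt
  · have hy : y = a := le_antisymm (by rw [heq]; exact h2) h1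
    exact ⟨1, zero_le_one, le_rfl, by rw [← heq, hy]; ring, by rw [hy]; ring_nf; exact le_rfl⟩
  · obtain ⟨τ, ht0, ht1, hyeq, hmul⟩ := combo_exists h1 h2 hlt
    exact ⟨τ, ht0, ht1, hmul, h a y m τ ht0 ht1 h1 h2 hyeq⟩

private lemma subK_le_max {θ K : ℝ} {g : ℝ → ℝ} (h : SubKConvex θ K g) (m : ℤ) {a y : ℝ}
    (h1 : a ≤ y) (h2 : y ≤ (m : ℝ) * θ) :
    g y ≤ max (g a) (g ((m : ℝ) * θ) + K) := by
  obtain ⟨τ, ht0, ht1, _, hle⟩ := subK_combo h m h1 h2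
  refine hle.trans ?_
  have h3 : τ * g a ≤ τ * max (g a) (g ((m : ℝ) * θ) + K) :=
    mul_le_mul_of_nonneg_left (le_max_left _ _) ht0
  have h4 : (1 - τ) * (g ((m : ℝ) * θ) + K) ≤ (1 - τ) * max (g a) (g ((m : ℝ) * θ) + K) :=
    mul_le_mul_of_nonneg_left (le_max_right _ _) (by linarith)
  linarith

private lemma tsum_aux {a b c fn : ℕ → ℝ} {τ K1 : ℝ}
    (ha : Summable a) (hb : Summable b) (hc : Summable c) (hfn : Summable fn)
    (h : ∀ n, a n ≤ τ * b n + (1 - τ) * (c n + K1 * fn n)) :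
    ∑' n, a n ≤ τ * ∑' n, b n + (1 - τ) * (∑' n, c n + K1 * ∑' n, fn n) := by
  have hs2 : Summable (fun n => c n + K1 * fn n) := hc.add (hfn.mul_left K1)
  have hs : Summable (fun n => τ * b n + (1 - τ) * (c n + K1 * fn n)) :=
    (hb.mul_left τ).add (hs2.mul_left (1 - τ))
  calc ∑' n, a n ≤ ∑' n, (τ * b n + (1 - τ) * (c n + K1 * fn n)) := Summable.tsum_le_tsum h ha hs
  _ = τ * ∑' n, b n + (1 - τ) * (∑' n, c n + K1 * ∑' n, fn n) := by
      rw [Summable.tsum_add (hb.mul_left τ) (hs2.mul_left (1 - τ)), tsum_mul_left, tsum_mul_left,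
        Summable.tsum_add hc (hfn.mul_left K1), tsum_mul_left]

private lemma tsum_aux2 {a c fn : ℕ → ℝ} {K1 : ℝ}
    (ha : Summable a) (hc : Summable c) (hfn : Summable fn)
    (h : ∀ n, a n ≤ c n + K1 * fn n) :
    ∑' n, a n ≤ ∑' n, c n + K1 * ∑' n, fn n := by
  have := tsum_aux (τ := 0) ha ha hc hfn (fun n => by linarith [h n])
  linarith

set_option maxHeartbeats 2000000 in
theorem stmt4
    (T : ℕ) (hT : 2 ≤ T)
    (α : ℝ) (hα0 : 0 < α) (hα1 : α ≤ 1)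
    (K : ℕ → ℝ) (hK0 : ∀ t, t < T → 0 ≤ K t)
    (hKmono : ∀ t, t + 2 ≤ T → α * K (t + 1) ≤ K t)
    (ν : ℕ → MeasureTheory.Measure ℝ)
    (hprob : ∀ t, MeasureTheory.IsProbabilityMeasure (ν t))
    (hpos : ∀ t, ν t (Set.Iio 0) = 0)
    (F : ℕ → ℝ → ℝ) (hF : ∀ t x, F t x = (ν t (Set.Iic x)).toReal)
    (C : ℕ → ℝ → ℝ)
    (hCconv : ∀ t, t < T → ConvexOn ℝ Set.univ (C t))
    (hCcoer : ∀ t, t < T → Filter.Tendsto (C t) (Filter.cocompact ℝ) Filter.atTop)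
    (θ : ℝ) (hθ : 0 < θ)
    (f : ℕ → ℤ → ℝ)
    (hf : ∀ t (n : ℤ), f t n = F t (((n : ℝ) + 1) * θ) - F t ((n : ℝ) * θ))
    (Cm SU : ℕ → ℝ)
    (hCm : ∀ t, t < T → IsLeast {x | ∀ y, C t x ≤ C t y} (Cm t))
    (hSU : ∀ t, t < T → ∀ n0 : ℤ, (n0 : ℝ) * θ < Cm t → Cm t ≤ ((n0 : ℝ) + 1) * θ →
      IsLeast {w | (∃ m : ℤ, w = (m : ℝ) * θ) ∧ Cm t ≤ w ∧ C t ((n0 : ℝ) * θ) + K t < C t w} (SU t))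
    (s S : ℕ → ℝ) (I Ibar : ℕ → ℝ)
    (hsT1a : s (T - 1) ≤ Cm (T - 1))
    (hsT1b : C (T - 1) (s (T - 1)) = C (T - 1) (Cm (T - 1)) + K (T - 1))
    (hIbarT1 : Ibar (T - 1) = s (T - 1))
    (hI : ∀ t, t + 2 ≤ T →
      IsGreatest {w | (∃ m : ℤ, w = (m : ℝ) * θ) ∧ w < min (Ibar (t + 1) - θ) (Cm t)} (I t))
    (hIbar : ∀ t, t + 2 ≤ T →
      IsGreatest {w | (∃ m : ℤ, w = (m : ℝ) * θ) ∧ w ≤ I t ∧ C t (I t) + K t < C t w} (Ibar t - θ))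
    (H V : ℕ → ℝ → ℝ)
    (hHT1 : ∀ y, H (T - 1) y = C (T - 1) y)
    (hST1 : S (T - 1) = Cm (T - 1))
    (hV : ∀ t, t < T → ∀ y, V t y = if y < s t then H t (S t) + K t else H t y)
    (hHrec : ∀ t, t + 2 ≤ T → ∀ y,
      H t y = C t y + α * ∑' n : ℕ, V (t + 1) (y - ((n : ℝ) - 1) * θ) * f t ((n : ℤ) - 1))
    (hSdef : ∀ t, t + 2 ≤ T →
      IsGreatest {w | (∃ m : ℤ, w = (m : ℝ) * θ) ∧ I t ≤ w ∧ w ≤ SU t ∧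
        ∀ u, (∃ n : ℤ, u = (n : ℝ) * θ) → I t ≤ u → u ≤ SU t → H t w ≤ H t u} (S t))
    (hsdef0 : ∀ t, t + 2 ≤ T → K t = 0 → s t = S t)
    (hsdef1 : ∀ t, t + 2 ≤ T → 0 < K t →
      IsLeast {w | (∃ m : ℤ, w = (m : ℝ) * θ) ∧ Ibar t ≤ w ∧ w ≤ S t ∧ H t w ≤ H t (S t) + K t} (s t))
    :
    ∀ t, t < T → SubKConvex θ (K t) (H t) ∧ SubKConvex θ (K t) (V t) := by
  -- basic facts about F and f
  have hFmono : ∀ t ⦃a b : ℝ⦄, a ≤ b → F t a ≤ F t b := by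
    intro t a b hab
    haveI := hprob t
    rw [hF, hF]
    exact ENNReal.toReal_mono (measure_ne_top _ _)
      (measure_mono (Set.Iic_subset_Iic.mpr hab))
  have hF0 : ∀ t x, 0 ≤ F t x := fun t x => by rw [hF]; exact ENNReal.toReal_nonneg
  have hF1 : ∀ t x, F t x ≤ 1 := by
    intro t x
    haveI := hprob t
    rw [hF]
    have h1 : ν t (Set.Iic x) ≤ 1 := prob_le_one
    calc (ν t (Set.Iic x)).toReal ≤ (1 : ENNReal).toReal :=
          ENNReal.toReal_mono ENNReal.one_ne_top h1
    _ = 1 := by simp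
  have hfnn : ∀ t (n : ℤ), 0 ≤ f t n := by
    intro t n
    rw [hf]
    have := hFmono t (show (n : ℝ) * θ ≤ ((n : ℝ) + 1) * θ by nlinarith)
    linarith
  have hfpartial : ∀ t N, ∑ n ∈ Finset.range N, f t ((n : ℤ) - 1) ≤ 1 := by
    intro t N
    have hterm : ∀ n : ℕ, f t ((n : ℤ) - 1)
        = (fun k : ℕ => F t (((k : ℝ) - 1) * θ)) (n + 1)
          - (fun k : ℕ => F t (((k : ℝ) - 1) * θ)) n := by
      intro n
      rw [hf]
      push_cast
      ring_nf
    calc ∑ n ∈ Finset.range N, f t ((n : ℤ) - 1)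
        = ∑ n ∈ Finset.range N, ((fun k : ℕ => F t (((k : ℝ) - 1) * θ)) (n + 1)
          - (fun k : ℕ => F t (((k : ℝ) - 1) * θ)) n) := by
          exact Finset.sum_congr rfl fun n _ => hterm n
    _ = F t (((N : ℝ) - 1) * θ) - F t (((0 : ℝ) - 1) * θ) := by
          rw [Finset.sum_range_sub (fun k : ℕ => F t (((k : ℝ) - 1) * θ))]
          norm_num
    _ ≤ 1 := by linarith [hF1 t (((N : ℝ) - 1) * θ), hF0 t (((0 : ℝ) - 1) * θ)]
  have hfsummable : ∀ t, Summable (fun n : ℕ => f t ((n : ℤ) - 1)) :=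
    fun t => summable_of_sum_range_le (fun n => hfnn t _) (hfpartial t)
  have hfsum1 : ∀ t, (∑' n : ℕ, f t ((n : ℤ) - 1)) ≤ 1 :=
    fun t => Real.tsum_le_of_sum_range_le (fun n => hfnn t _) (hfpartial t)
  have hfsumnn : ∀ t, 0 ≤ ∑' n : ℕ, f t ((n : ℤ) - 1) :=
    fun t => tsum_nonneg (fun n => hfnn t _)
  -- V below / above s
  have hVlt : ∀ u, u < T → ∀ w, w < s u → V u w = H u (S u) + K u := by
    intro u hu w hw; rw [hV u hu, if_pos hw]
  have hVge : ∀ u, u < T → ∀ w, s u ≤ w → V u w = H u w := by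
    intro u hu w hw; rw [hV u hu, if_neg (not_lt.mpr hw)]
  -- summability of the recursion series
  have hgsum : ∀ t, t + 2 ≤ T → ∀ y : ℝ,
      Summable (fun n : ℕ => V (t + 1) (y - ((n : ℝ) - 1) * θ) * f t ((n : ℤ) - 1)) := by
    intro t ht y
    have ht1 : t + 1 < T := by omega
    obtain ⟨N, hN⟩ := exists_nat_gt ((y - s (t + 1)) / θ + 1)
    set c : ℝ := H (t + 1) (S (t + 1)) + K (t + 1) with hc
    have key : ∀ n : ℕ, N ≤ n → V (t + 1) (y - ((n : ℝ) - 1) * θ) = c := by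
      intro n hn
      apply hVlt (t + 1) ht1
      have h1 : ((y - s (t + 1)) / θ + 1) < (n : ℝ) :=
        lt_of_lt_of_le hN (by exact_mod_cast hn)
      have h2 : y - s (t + 1) < ((n : ℝ) - 1) * θ := by
        have := (div_lt_iff₀ hθ).mp (show (y - s (t + 1)) / θ < (n : ℝ) - 1 by linarith)
        linarith
      linarith
    have h1 : Summable (fun n : ℕ =>
        (V (t + 1) (y - ((n : ℝ) - 1) * θ) - c) * f t ((n : ℤ) - 1)) := by
      apply summable_of_ne_finset_zero (s := Finset.range N)
      intro n hn
      rw [Finset.mem_range, not_lt] at hn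
      rw [key n hn]; ring
    have h2 := (hfsummable t).mul_left c
    exact (h1.add h2).congr (fun n => by ring)
  -- the main downward induction
  have key : ∀ d t, t < T → T = t + 1 + d →
      (SubKConvex θ (K t) (H t) ∧ SubKConvex θ (K t) (V t) ∧
       (∀ m : ℤ, H t (S t) ≤ H t ((m : ℝ) * θ)) ∧
       (∀ a b : ℤ, a ≤ b → V t ((a : ℝ) * θ) ≤ V t ((b : ℝ) * θ) + K t) ∧
       (∀ a b : ℤ, a ≤ b → ((b : ℝ) * θ) < Ibar t → V t ((b : ℝ) * θ) ≤ V t ((a : ℝ) * θ))) := by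
    intro d
    induction d with
    | zero =>
      intro t htT hTt
      have he : T - 1 = t := by omega
      rw [he] at hsT1a hsT1b hIbarT1 hHT1 hST1
      have hKt := hK0 t htT
      have hconv := hCconv t htT
      have hCmm : ∀ y, C t (Cm t) ≤ C t y := (hCm t htT).1
      have hA : SubKConvex θ (K t) (H t) := by
        intro x y m τ h0 h1 hxy hyz hcombo
        rw [hHT1, hHT1, hHT1]
        have := cvx_combo hconv h0 h1 hcombo
        linarith [mul_nonneg (by linarith : (0:ℝ) ≤ 1 - τ) hKt]
      have hP : ∀ m : ℤ, H t (S t) ≤ H t ((m : ℝ) * θ) := by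
        intro m; rw [hHT1, hHT1, hST1]; exact hCmm _
      have hVt : ∀ w, V t w = if w < s t then C t (Cm t) + K t else C t w := by
        intro w; simp only [hV t htT, hHT1, hST1]
      have hVgeC : ∀ w, C t (Cm t) ≤ V t w := by
        intro w; rw [hVt]; split_ifs with hw
        · linarith
        · exact hCmm w
      have hQ : ∀ a b : ℤ, a ≤ b → V t ((a : ℝ) * θ) ≤ V t ((b : ℝ) * θ) + K t := by
        intro a b hab
        have hab' : (a : ℝ) * θ ≤ (b : ℝ) * θ :=
          mul_le_mul_of_nonneg_right (by exact_mod_cast hab) hθ.le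
        rcases lt_or_ge ((a : ℝ) * θ) (s t) with ha | ha
        · rw [hVt ((a:ℝ)*θ), if_pos ha]
          linarith [hVgeC ((b:ℝ)*θ)]
        · rw [hVt ((a:ℝ)*θ), if_neg (not_lt.mpr ha), hVt ((b:ℝ)*θ),
            if_neg (not_lt.mpr (ha.trans hab'))]
          rcases le_or_gt ((a : ℝ) * θ) (Cm t) with haC | haC
          · have h1 : C t ((a:ℝ)*θ) ≤ C t (s t) := cvx_min_left hconv hCmm ha haC
            linarith [hCmm ((b:ℝ)*θ)]
          · have := cvx_min_right hconv hCmm haC.le hab'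
            linarith
      have hN : ∀ a b : ℤ, a ≤ b → ((b : ℝ) * θ) < Ibar t →
          V t ((b : ℝ) * θ) ≤ V t ((a : ℝ) * θ) := by
        intro a b hab hb
        rw [hIbarT1] at hb
        have hab' : (a : ℝ) * θ ≤ (b : ℝ) * θ :=
          mul_le_mul_of_nonneg_right (by exact_mod_cast hab) hθ.le
        rw [hVt ((b:ℝ)*θ), if_pos hb, hVt ((a:ℝ)*θ), if_pos (lt_of_le_of_lt hab' hb)]
      have hB : SubKConvex θ (K t) (V t) := by
        intro x y m τ h0 h1 hxy hyz hcombo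
        rcases lt_or_ge y (s t) with hy | hy
        · rw [hVt y, if_pos hy, hVt x, if_pos (lt_of_le_of_lt hxy hy)]
          linarith [mul_nonneg (by linarith : (0:ℝ) ≤ 1 - τ)
            (sub_nonneg.mpr (hVgeC ((m:ℝ)*θ)))]
        · have hzs : s t ≤ (m:ℝ)*θ := hy.trans hyz
          rw [hVt y, if_neg (not_lt.mpr hy), hVt ((m:ℝ)*θ), if_neg (not_lt.mpr hzs)]
          rcases le_or_gt (s t) x with hx | hx
          · rw [hVt x, if_neg (not_lt.mpr hx)]
            have := cvx_combo hconv h0 h1 hcombo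
            linarith [mul_nonneg (by linarith : (0:ℝ) ≤ 1 - τ) hKt]
          · rw [hVt x, if_pos hx]
            rcases le_or_gt y (Cm t) with hyC | hyC
            · have h1 : C t y ≤ C t (s t) := cvx_min_left hconv hCmm hy hyC
              have h2 : C t (Cm t) ≤ C t ((m:ℝ)*θ) := hCmm _
              linarith [mul_nonneg (by linarith : (0:ℝ) ≤ 1 - τ) (by linarith :
                (0:ℝ) ≤ C t ((m:ℝ)*θ) - C t (Cm t))]
            · rcases eq_or_lt_of_le hyz with hyz' | hyz'
              · have hxz : x < (m:ℝ)*θ := by linarith [hsT1a]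
                have h3 : τ * (x - (m:ℝ)*θ) = 0 := by
                  have h4 := hcombo; rw [hyz'] at h4; linear_combination -h4
                have hτ : τ = 0 := by
                  rcases mul_eq_zero.mp h3 with h | h
                  · exact h
                  · exfalso; linarith
                rw [hτ, hyz']
                linarith [hKt]
              · obtain ⟨σ, hσ0, hσ1, hσy, hσeq⟩ :=
                  combo_exists (le_of_lt hyC) (le_of_lt hyz')
                    (by linarith : Cm t < (m:ℝ)*θ)
                have hCy : C t y ≤ σ * C t (Cm t) + (1 - σ) * C t ((m:ℝ)*θ) :=
                  cvx_combo hconv hσ0 hσ1 hσy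
                have hτeq : τ * ((m:ℝ)*θ - x) = (m:ℝ)*θ - y := by linear_combination hcombo
                have hxCm : x < Cm t := lt_of_lt_of_le hx hsT1a
                have hτσ : τ ≤ σ := by
                  refine le_of_mul_le_mul_right ?_ (by linarith : 0 < (m:ℝ)*θ - Cm t)
                  nlinarith [hσeq, hτeq, mul_nonneg h0 (by linarith : (0:ℝ) ≤ Cm t - x)]
                have hzC : C t (Cm t) ≤ C t ((m:ℝ)*θ) := hCmm _
                nlinarith [mul_nonneg (sub_nonneg.mpr hτσ) (sub_nonneg.mpr hzC), hKt, h0, hCy]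
      exact ⟨hA, hB, hP, hQ, hN⟩
    | succ d ih =>
      intro t htT hTt
      have ht2 : t + 2 ≤ T := by omega
      have ht1T : t + 1 < T := by omega
      obtain ⟨ihA, ihB, ihP, ihQ, ihN⟩ := ih (t + 1) ht1T (by omega)
      have hKt := hK0 t htT
      have hK1 := hK0 (t + 1) ht1T
      have hconv := hCconv t htT
      have hCmm : ∀ y, C t (Cm t) ≤ C t y := (hCm t htT).1
      have hHt := hHrec t ht2
      have hg := hgsum t ht2
      have hαK : α * K (t + 1) * (∑' n : ℕ, f t ((n : ℤ) - 1)) ≤ K t := by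
        have h1 : α * K (t + 1) * (∑' n : ℕ, f t ((n : ℤ) - 1)) ≤ α * K (t + 1) * 1 :=
          mul_le_mul_of_nonneg_left (hfsum1 t) (by positivity)
        have h2 := hKmono t ht2
        linarith
      have hshift : ∀ (j : ℤ) (n : ℕ),
          (j : ℝ) * θ - ((n : ℝ) - 1) * θ = ((j - n + 1 : ℤ) : ℝ) * θ := by
        intro j n; push_cast; ring
      -- sub-K-convexity of H t
      have hA : SubKConvex θ (K t) (H t) := by
        intro x y m τ h0 h1 hxy hyz hcombo
        have hCle : C t y ≤ τ * C t x + (1 - τ) * C t ((m : ℝ) * θ) :=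
          cvx_combo hconv h0 h1 hcombo
        have hpt : ∀ n : ℕ, V (t+1) (y - ((n:ℝ)-1)*θ) * f t ((n:ℤ)-1)
            ≤ τ * (V (t+1) (x - ((n:ℝ)-1)*θ) * f t ((n:ℤ)-1))
              + (1 - τ) * (V (t+1) ((m:ℝ)*θ - ((n:ℝ)-1)*θ) * f t ((n:ℤ)-1)
                + K (t+1) * f t ((n:ℤ)-1)) := by
          intro n
          have harg : y - ((n:ℝ)-1)*θ
              = τ * (x - ((n:ℝ)-1)*θ) + (1 - τ) * (((m - n + 1 : ℤ):ℝ) * θ) := by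
            rw [← hshift m n, hcombo]; ring
          have h2 : y - ((n:ℝ)-1)*θ ≤ ((m - n + 1 : ℤ):ℝ) * θ := by
            rw [← hshift m n]; linarith
          have h3 := ihB (x - ((n:ℝ)-1)*θ) (y - ((n:ℝ)-1)*θ) (m - n + 1) τ h0 h1
            (by linarith) h2 harg
          rw [← hshift m n] at h3
          have h4 := mul_le_mul_of_nonneg_right h3 (hfnn t ((n:ℤ)-1))
          calc V (t+1) (y - ((n:ℝ)-1)*θ) * f t ((n:ℤ)-1)
              ≤ (τ * V (t+1) (x - ((n:ℝ)-1)*θ)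
                + (1-τ) * (V (t+1) ((m:ℝ)*θ - ((n:ℝ)-1)*θ) + K (t+1))) * f t ((n:ℤ)-1) := h4
          _ = _ := by ring
        have hts := tsum_aux (hg y) (hg x) (hg ((m:ℝ)*θ)) (hfsummable t) hpt
        rw [hHt x, hHt y, hHt ((m:ℝ)*θ)]
        have e1 := mul_le_mul_of_nonneg_left hts hα0.le
        have e2 : (1 - τ) * (α * K (t+1) * (∑' n : ℕ, f t ((n:ℤ)-1))) ≤ (1-τ) * K t :=
          mul_le_mul_of_nonneg_left hαK (by linarith)
        nlinarith [e1, e2, hCle]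
      -- unpack S and I data
      obtain ⟨⟨⟨mS, hmS⟩, hIS, hSSU, hSmin⟩, hSub⟩ := hSdef t ht2
      obtain ⟨⟨⟨iI, hiI⟩, hIlt⟩, hIub⟩ := hI t ht2
      have hIlt1 : I t < Ibar (t+1) - θ := (lt_min_iff.mp hIlt).1
      have hIltCm : I t < Cm t := (lt_min_iff.mp hIlt).2
      -- H t is nonincreasing on the grid left of I t
      have hRstep : ∀ w : ℤ, (w:ℝ)*θ + θ ≤ I t → H t ((w:ℝ)*θ + θ) ≤ H t ((w:ℝ)*θ) := by
        intro w hw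
        rw [hHt, hHt]
        have hC : C t ((w:ℝ)*θ + θ) ≤ C t ((w:ℝ)*θ) :=
          cvx_min_left hconv hCmm (by linarith) (by linarith)
        have hE : (∑' n : ℕ, V (t+1) (((w:ℝ)*θ + θ) - ((n:ℝ)-1)*θ) * f t ((n:ℤ)-1))
            ≤ ∑' n : ℕ, V (t+1) ((w:ℝ)*θ - ((n:ℝ)-1)*θ) * f t ((n:ℤ)-1) := by
          refine Summable.tsum_le_tsum (fun n => ?_) (hg _) (hg _)
          refine mul_le_mul_of_nonneg_right ?_ (hfnn t _)
          have e1 : ((w:ℝ)*θ + θ) - ((n:ℝ)-1)*θ = ((w - n + 2 : ℤ):ℝ) * θ := by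
            push_cast; ring
          have e2 := hshift w n
          rw [e1, e2]
          refine ihN (w - n + 1) (w - n + 2) (by omega) ?_
          have e3 : ((w - n + 2 : ℤ):ℝ) * θ ≤ (w:ℝ)*θ + 2*θ := by
            push_cast
            nlinarith [mul_nonneg (Nat.cast_nonneg n : (0:ℝ) ≤ (n:ℝ)) hθ.le]
          linarith
        linarith [mul_le_mul_of_nonneg_left hE hα0.le]
      have hchain : ∀ k : ℕ, ∀ j : ℤ, (j:ℝ)*θ + (k:ℝ)*θ ≤ I t →
          H t ((j:ℝ)*θ + (k:ℝ)*θ) ≤ H t ((j:ℝ)*θ) := by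
        intro k
        induction k with
        | zero => intro j _; simp
        | succ k ihk =>
          intro j hw
          push_cast at hw
          have hw2 : ((j + 1 : ℤ):ℝ)*θ + (k:ℝ)*θ ≤ I t := by push_cast; linarith
          have h1 := ihk (j + 1) hw2
          have h2 := hRstep j (by
            nlinarith [mul_nonneg (Nat.cast_nonneg k : (0:ℝ) ≤ (k:ℝ)) hθ.le])
          have e1 : (j:ℝ)*θ + ((k+1 : ℕ):ℝ)*θ = ((j+1:ℤ):ℝ)*θ + (k:ℝ)*θ := by
            push_cast; ring
          have h3 : H t (((j+1:ℤ):ℝ)*θ) ≤ H t ((j:ℝ)*θ) := by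
            have e2 : ((j+1:ℤ):ℝ)*θ = (j:ℝ)*θ + θ := by push_cast; ring
            rw [e2]; exact h2
          rw [e1]
          exact h1.trans h3
      -- the grid point just below Cm t
      set n0 : ℤ := ⌈Cm t / θ⌉ - 1 with hn0def
      have hn0a : (n0:ℝ) * θ < Cm t := by
        have h1 : (⌈Cm t / θ⌉ : ℝ) < Cm t / θ + 1 := Int.ceil_lt_add_one _
        have h2 : (n0:ℝ) < Cm t / θ := by
          rw [hn0def]; push_cast; linarith
        calc (n0:ℝ)*θ < (Cm t / θ) * θ := mul_lt_mul_of_pos_right h2 hθ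
        _ = Cm t := by field_simp
      have hn0b : Cm t ≤ ((n0:ℝ) + 1) * θ := by
        have h1 : Cm t / θ ≤ (⌈Cm t / θ⌉ : ℝ) := Int.le_ceil _
        have h2 : ((n0:ℝ) + 1) = (⌈Cm t / θ⌉ : ℝ) := by rw [hn0def]; push_cast; ring
        rw [h2]
        calc Cm t = (Cm t / θ) * θ := by field_simp
        _ ≤ (⌈Cm t / θ⌉ : ℝ) * θ := mul_le_mul_of_nonneg_right h1 hθ.le
      obtain ⟨⟨⟨mU, hmU⟩, hCmSU, hCgap⟩, hSUlb⟩ := hSU t htT n0 hn0a hn0b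
      have hIn0 : I t ≤ (n0:ℝ) * θ := by
        have h1 : (iI:ℝ) * θ < ((n0:ℝ)+1) * θ := by rw [← hiI] at *; linarith
        have h2 : (iI:ℝ) < (n0:ℝ) + 1 := lt_of_mul_lt_mul_right h1 hθ.le
        have h3 : iI ≤ n0 := by
          have h4 : (iI:ℤ) < n0 + 1 := by exact_mod_cast h2
          omega
        rw [hiI]
        exact mul_le_mul_of_nonneg_right (by exact_mod_cast h3) hθ.le
      have hn0SU : (n0:ℝ) * θ ≤ SU t := le_trans hn0a.le hCmSU
      have hHn0 : H t (S t) ≤ H t ((n0:ℝ)*θ) := hSmin _ ⟨n0, rfl⟩ hIn0 hn0SU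
      -- S t is a global minimizer of H t on the grid
      have hP : ∀ m : ℤ, H t (S t) ≤ H t ((m:ℝ)*θ) := by
        intro m
        rcases le_or_gt ((m:ℝ)*θ) (I t) with hm | hm
        · have hmI : m ≤ iI := by
            have h4 : (m:ℝ)*θ ≤ (iI:ℝ)*θ := by rw [← hiI]; exact hm
            exact_mod_cast le_of_mul_le_mul_right h4 hθ
          have hS_le_I : H t (S t) ≤ H t (I t) := hSmin _ ⟨iI, hiI⟩ le_rfl (by linarith)
          have hcast : (((iI - m).toNat : ℕ):ℝ) = (iI:ℝ) - (m:ℝ) := by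
            have h5 : ((iI - m).toNat : ℤ) = iI - m := Int.toNat_of_nonneg (by omega)
            calc (((iI - m).toNat : ℕ):ℝ) = (((iI - m).toNat : ℤ):ℝ) := by push_cast; ring
            _ = ((iI - m : ℤ):ℝ) := by rw [h5]
            _ = (iI:ℝ) - (m:ℝ) := by push_cast; ring
          have e1 : (m:ℝ)*θ + (((iI - m).toNat : ℕ):ℝ)*θ = I t := by
            rw [hcast, hiI]; ring
          have h4 := hchain (iI - m).toNat m (le_of_eq e1)
          rw [e1] at h4
          exact hS_le_I.trans h4
        · rcases le_or_gt ((m:ℝ)*θ) (SU t) with hm2 | hm2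
          · exact hSmin _ ⟨m, rfl⟩ hm.le hm2
          · have hCz : C t (SU t) ≤ C t ((m:ℝ)*θ) := cvx_min_right hconv hCmm hCmSU hm2.le
            have hn0m : n0 ≤ m := by
              have h4 : (n0:ℝ)*θ < (m:ℝ)*θ := by linarith
              have h5 : (n0:ℝ) < (m:ℝ) := lt_of_mul_lt_mul_right h4 hθ.le
              exact_mod_cast h5.le
            have hEcmp : (∑' n : ℕ, V (t+1) ((n0:ℝ)*θ - ((n:ℝ)-1)*θ) * f t ((n:ℤ)-1))
                ≤ (∑' n : ℕ, V (t+1) ((m:ℝ)*θ - ((n:ℝ)-1)*θ) * f t ((n:ℤ)-1))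
                  + K (t+1) * ∑' n : ℕ, f t ((n:ℤ)-1) := by
              refine tsum_aux2 (hg _) (hg _) (hfsummable t) (fun n => ?_)
              rw [hshift n0 n, hshift m n]
              have h5 := ihQ (n0 - n + 1) (m - n + 1) (by omega)
              have h6 := mul_le_mul_of_nonneg_right h5 (hfnn t ((n:ℤ)-1))
              calc V (t+1) (((n0 - n + 1 : ℤ):ℝ)*θ) * f t ((n:ℤ)-1)
                  ≤ (V (t+1) (((m - n + 1 : ℤ):ℝ)*θ) + K (t+1)) * f t ((n:ℤ)-1) := h6
              _ = _ := by ring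
            refine hHn0.trans ?_
            rw [hHt, hHt]
            have e4 := mul_le_mul_of_nonneg_left hEcmp hα0.le
            nlinarith [e4, hαK, hCgap, hCz]
      -- facts about s t
      have hsfacts : s t ≤ S t ∧ H t (s t) ≤ H t (S t) + K t := by
        rcases hKt.lt_or_eq with hpos | hzero
        · obtain ⟨⟨_, _, h1, h2⟩, _⟩ := hsdef1 t ht2 hpos
          exact ⟨h1, h2⟩
        · rw [hsdef0 t ht2 hzero.symm]
          exact ⟨le_rfl, by linarith⟩
      obtain ⟨hsS, hHs⟩ := hsfacts
      have hHmid : ∀ w, s t ≤ w → w ≤ S t → H t w ≤ H t (S t) + K t := by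
        intro w h1 h2
        have h3 := subK_le_max hA mS h1 (by rw [← hmS]; exact h2)
        rw [← hmS] at h3
        exact h3.trans (max_le hHs le_rfl)
      -- Q : V t decreases by at most K t going right on the grid
      have hQ : ∀ a b : ℤ, a ≤ b → V t ((a:ℝ)*θ) ≤ V t ((b:ℝ)*θ) + K t := by
        intro a b hab
        have hab' : (a:ℝ)*θ ≤ (b:ℝ)*θ :=
          mul_le_mul_of_nonneg_right (by exact_mod_cast hab) hθ.le
        rcases lt_or_ge ((a:ℝ)*θ) (s t) with ha | ha
        · rw [hVlt t htT _ ha]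
          have hVb : H t (S t) ≤ V t ((b:ℝ)*θ) := by
            rcases lt_or_ge ((b:ℝ)*θ) (s t) with hb | hb
            · rw [hVlt t htT _ hb]; linarith
            · rw [hVge t htT _ hb]; exact hP b
          linarith
        · have hb : s t ≤ (b:ℝ)*θ := ha.trans hab'
          rw [hVge t htT _ ha, hVge t htT _ hb]
          rcases le_or_gt ((a:ℝ)*θ) (S t) with haS | haS
          · linarith [hHmid _ ha haS, hP b]
          · have h6 := subK_le_max hA b (le_of_lt haS : S t ≤ (a:ℝ)*θ) hab'
            exact h6.trans (max_le ((hP b).trans (by linarith)) le_rfl)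
      -- N : V t is nonincreasing on the grid left of Ibar t
      have hN : ∀ a b : ℤ, a ≤ b → (b:ℝ)*θ < Ibar t → V t ((b:ℝ)*θ) ≤ V t ((a:ℝ)*θ) := by
        intro a b hab hbI
        have hab' : (a:ℝ)*θ ≤ (b:ℝ)*θ :=
          mul_le_mul_of_nonneg_right (by exact_mod_cast hab) hθ.le
        rcases lt_or_ge ((b:ℝ)*θ) (s t) with hb | hb
        · rw [hVlt t htT _ hb, hVlt t htT _ (lt_of_le_of_lt hab' hb)]
        · rcases hKt.lt_or_eq with hpos | hzero
          · obtain ⟨⟨_, h1, _, _⟩, _⟩ := hsdef1 t ht2 hpos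
            linarith
          · have hs0 := hsdef0 t ht2 hzero.symm
            obtain ⟨⟨_, hIbarle, _⟩, _⟩ := hIbar t ht2
            have h7 : (b:ℝ)*θ < ((iI:ℝ)+1)*θ := by
              rw [hiI] at hIbarle
              linarith
            have hbiI : b ≤ iI := by
              have h8 : (b:ℝ) < (iI:ℝ)+1 := lt_of_mul_lt_mul_right h7 hθ.le
              have h9 : (b:ℤ) < iI + 1 := by exact_mod_cast h8
              omega
            have hbI' : (b:ℝ)*θ ≤ I t := by
              rw [hiI]
              exact mul_le_mul_of_nonneg_right (by exact_mod_cast hbiI) hθ.le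
            have hbS : (b:ℝ)*θ = s t := by
              rw [hs0]
              exact le_antisymm (by linarith) (by rw [← hs0]; exact hb)
            rw [hVge t htT _ hb]
            rcases lt_or_ge ((a:ℝ)*θ) (s t) with ha | ha
            · rw [hVlt t htT _ ha, hbS, hs0]
              linarith
            · have h10 : (a:ℝ)*θ = (b:ℝ)*θ := le_antisymm hab' (by rw [hbS]; exact ha)
              rw [h10, hVge t htT _ hb]
      -- B : sub-K-convexity of V t
      have hB : SubKConvex θ (K t) (V t) := by
        intro x y m τ h0 h1 hxy hyz hcombo
        rcases lt_or_ge y (s t) with hy | hy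
        · rw [hVlt t htT _ hy, hVlt t htT _ (lt_of_le_of_lt hxy hy)]
          have hVz : H t (S t) ≤ V t ((m:ℝ)*θ) := by
            rcases lt_or_ge ((m:ℝ)*θ) (s t) with hz | hz
            · rw [hVlt t htT _ hz]; linarith
            · rw [hVge t htT _ hz]; exact hP m
          linarith [mul_nonneg (by linarith : (0:ℝ) ≤ 1-τ)
            (by linarith : (0:ℝ) ≤ V t ((m:ℝ)*θ) - H t (S t))]
        · have hzs : s t ≤ (m:ℝ)*θ := hy.trans hyz
          rw [hVge t htT _ hy, hVge t htT _ hzs]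
          rcases le_or_gt (s t) x with hx | hx
          · rw [hVge t htT _ hx]
            exact hA x y m τ h0 h1 hxy hyz hcombo
          · rw [hVlt t htT _ hx]
            rcases le_or_gt y (S t) with hyS | hyS
            · linarith [hHmid y hy hyS,
                mul_nonneg (by linarith : (0:ℝ) ≤ 1-τ) (sub_nonneg.mpr (hP m))]
            · rcases eq_or_lt_of_le hyz with hyz' | hyz'
              · have hxz : x < (m:ℝ)*θ := by linarith
                have h3 : τ * (x - (m:ℝ)*θ) = 0 := by
                  have h4 := hcombo; rw [hyz'] at h4; linear_combination -h4
                have hτ : τ = 0 := by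
                  rcases mul_eq_zero.mp h3 with h | h
                  · exact h
                  · exfalso; linarith
                rw [hτ, hyz']
                linarith
              · obtain ⟨σ, hσ0, hσ1, hσy, hσeq⟩ := combo_exists (le_of_lt hyS)
                  (le_of_lt hyz') (by linarith : S t < (m:ℝ)*θ)
                have hHy : H t y ≤ σ * H t (S t) + (1-σ) * (H t ((m:ℝ)*θ) + K t) :=
                  hA (S t) y m σ hσ0 hσ1 (le_of_lt hyS) hyz hσy
                have hτeq : τ * ((m:ℝ)*θ - x) = (m:ℝ)*θ - y := by linear_combination hcombo
                have hτσ : τ ≤ σ := by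
                  refine le_of_mul_le_mul_right ?_ (by linarith : 0 < (m:ℝ)*θ - S t)
                  nlinarith [hσeq, hτeq, mul_nonneg h0 (by linarith : (0:ℝ) ≤ S t - x)]
                linarith [mul_nonneg (sub_nonneg.mpr hτσ) (sub_nonneg.mpr (hP m)),
                  mul_nonneg hσ0 hKt, hHy]
      exact ⟨hA, hB, hP, hQ, hN⟩
  intro t0 ht0
  obtain ⟨d, hd⟩ : ∃ d, T = t0 + 1 + d := ⟨T - (t0 + 1), by omega⟩
  exact ⟨(key d t0 ht0 hd).1, (key d t0 ht0 hd).2.1⟩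
end

section
/- For each t = 0,…,T−1, one has H_t(S_t) ≤ inf_{z_j ∈ Z_θ} H_t(z_j); that is, the grid point S_t minimizes H_t over the whole grid Z_θ. -/
/-!
Backward induction on `t`, carrying along two properties of `V_t` on the grid: Scarf's
`K_t`-convexity and `V_t a ≤ V_t b + K_t` for `a ≤ b`. Given both for `V_{t+1}`, the function
`H_t` is `K_t`-convex, because the demand weights have total mass at most `1` and
`α K_{t+1} ≤ K_t`. Left of `I_t` every argument of `V_{t+1}` in the expectation lies below
`s_{t+1}`, so there `H_t` is `C_t` plus a constant and decreases towards `I_t`. Right of `S^U_t`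
the convex part has grown by more than `K_t` since `z_{n_0}`, while the expectation can drop by at
most `α K_{t+1} ≤ K_t`, so `H_t` exceeds `H_t(z_{n_0})`. Hence the minimum over `[I_t, S^U_t]` is
global, and the `(s, S)` modification `V_t` inherits both properties from `H_t`.
-/

open MeasureTheory Filter Set

/-- Scarf's `K`-convexity, `K + g z ≥ g y + (z - y) / (y - x) * (g y - g x)` for `x < y ≤ z`,
tested only at points of `A` and with the denominator cleared. -/
def KConvexOn (K : ℝ) (A : Set ℝ) (g : ℝ → ℝ) : Prop :=
  ∀ x ∈ A, ∀ y ∈ A, ∀ z ∈ A, x < y → y ≤ z → (z - y) * (g y - g x) ≤ (y - x) * (K + g z - g y)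

def KQuasiMonotoneOn (K : ℝ) (A : Set ℝ) (g : ℝ → ℝ) : Prop :=
  ∀ a ∈ A, ∀ b ∈ A, a ≤ b → g a ≤ g b + K

/-- The cost-to-go of the `(s, S)` policy: below `s`, pay `K` and order up to `S`. -/
noncomputable def sSPolicyValue (h : ℝ → ℝ) (K s S : ℝ) (x : ℝ) : ℝ :=
  if x < s then h S + K else h x

lemma ConvexOn.kConvexOn_zero {s : Set ℝ} {φ : ℝ → ℝ} (hφ : ConvexOn ℝ s φ) : KConvexOn 0 s φ := by
  intro x hx y hy z hz hxy hyz
  rcases hyz.eq_or_lt with rfl | hyz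
  · simp
  · have h := hφ.slope_mono_adjacent hx hz hxy hyz
    rw [div_le_div_iff₀ (by linarith) (by linarith)] at h
    linarith

namespace KConvexOn

variable {K K' : ℝ} {A B : Set ℝ} {g g' : ℝ → ℝ}

lemma mono_set (hg : KConvexOn K A g) (hBA : B ⊆ A) : KConvexOn K B g :=
  fun x hx y hy z hz => hg x (hBA hx) y (hBA hy) z (hBA hz)

lemma mono_const (hg : KConvexOn K A g) (hKK' : K ≤ K') : KConvexOn K' A g := by
  intro x hx y hy z hz hxy hyz
  nlinarith [hg x hx y hy z hz hxy hyz]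

lemma add (hg : KConvexOn K A g) (hg' : KConvexOn K' A g') : KConvexOn (K + K') A (g + g') := by
  intro x hx y hy z hz hxy hyz
  simp only [Pi.add_apply]
  linarith [hg x hx y hy z hz hxy hyz, hg' x hx y hy z hz hxy hyz]

lemma mul_const (hg : KConvexOn K A g) {c : ℝ} (hc : 0 ≤ c) :
    KConvexOn (K * c) A fun x => g x * c := by
  intro x hx y hy z hz hxy hyz
  nlinarith [mul_le_mul_of_nonneg_right (hg x hx y hy z hz hxy hyz) hc]

lemma const_mul (hg : KConvexOn K A g) {c : ℝ} (hc : 0 ≤ c) :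
    KConvexOn (c * K) A fun x => c * g x := by
  simpa only [mul_comm c] using hg.mul_const hc

lemma comp_sub_const (hg : KConvexOn K A g) {d : ℝ} (hd : ∀ x ∈ B, x - d ∈ A) :
    KConvexOn K B fun x => g (x - d) := by
  intro x hx y hy z hz hxy hyz
  have h := hg _ (hd x hx) _ (hd y hy) _ (hd z hz) (by linarith) (by linarith)
  simpa only [sub_sub_sub_cancel_right] using h

lemma tsum {g : ℕ → ℝ → ℝ} {K : ℕ → ℝ} (hg : ∀ n, KConvexOn (K n) A (g n)) (hK : Summable K)
    (hs : ∀ x ∈ A, Summable fun n => g n x) :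
    KConvexOn (∑' n, K n) A fun x => ∑' n, g n x := by
  intro x hx y hy z hz hxy hyz
  have h := Summable.tsum_le_tsum (fun n => hg n x hx y hy z hz hxy hyz)
    (((hs y hy).sub (hs x hx)).mul_left _) ((((hK.add (hs z hz)).sub (hs y hy))).mul_left _)
  rwa [tsum_mul_left, tsum_mul_left, Summable.tsum_sub (hs y hy) (hs x hx),
    Summable.tsum_sub (hK.add (hs z hz)) (hs y hy), Summable.tsum_add hK (hs z hz)] at h

end KConvexOn

section sSPolicy

variable {K s S : ℝ} {A : Set ℝ} {h : ℝ → ℝ}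

lemma KConvexOn.kConvexOn_sSPolicyValue (hh : KConvexOn K A h) (hK : 0 ≤ K) (hs : s ∈ A)
    (hmin : ∀ x ∈ A, h S ≤ h x) (hsS : h s ≤ h S + K) :
    KConvexOn K A (sSPolicyValue h K s S) := by
  intro a ha b hb c hc hab hbc
  simp only [sSPolicyValue]
  have hba : 0 < b - a := by linarith
  have hcb : 0 ≤ c - b := by linarith
  split_ifs <;> try linarith
  · nlinarith
  · nlinarith [hmin c hc]
  · rcases le_or_gt (h b) (h S + K) with hbS | hbS
    · nlinarith [hmin c hc]
    -- `h b > h S + K ≥ h s` forces `s < b`, and `K`-convexity at `s < b ≤ c` bounds the jump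
    have hsb : s < b := lt_of_le_of_ne (not_lt.mp ‹¬b < s›) (by rintro rfl; linarith)
    have hsbc := hh s hs b hb c hc hsb hbc
    have hslope : 0 ≤ K + h c - h b := by nlinarith
    nlinarith
  · exact hh a ha b hb c hc hab hbc

lemma KConvexOn.kQuasiMonotoneOn_sSPolicyValue (hh : KConvexOn K A h) (hK : 0 ≤ K)
    (hs : s ∈ A) (hS : S ∈ A) (hmin : ∀ x ∈ A, h S ≤ h x) (hsS : h s ≤ h S + K) :
    KQuasiMonotoneOn K A (sSPolicyValue h K s S) := by
  have hge : ∀ x ∈ A, h S ≤ sSPolicyValue h K s S x := by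
    intro x hx
    unfold sSPolicyValue
    split_ifs
    · linarith
    · exact hmin x hx
  intro a ha b hb hab
  unfold sSPolicyValue
  split_ifs with ha' hb'
  · linarith
  · linarith [hmin b hb]
  · linarith
  rcases lt_or_ge a S with haS | haS
  · suffices h a ≤ h S + K by linarith [hmin b hb]
    rcases (not_lt.mp ha').eq_or_lt with rfl | hsa
    · exact hsS
    -- otherwise `K`-convexity fails at `s < a < S`, since `h a > h S + K ≥ h s`
    by_contra! hcon
    nlinarith [hh s hs a ha S hS hsa haS.le]
  · rcases haS.eq_or_lt with rfl | hSa
    · linarith [hmin b hb]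
    nlinarith [hh S hS a ha b hb hSa hab, hmin a ha]

lemma ConvexOn.kConvexOn_and_kQuasiMonotoneOn_sSPolicyValue {C : ℝ → ℝ}
    (hC : ConvexOn ℝ univ C) (hK : 0 ≤ K) (hmin : ∀ x, C S ≤ C x) (hsS : C s ≤ C S + K)
    (A : Set ℝ) :
    KConvexOn K A (sSPolicyValue C K s S) ∧ KQuasiMonotoneOn K A (sSPolicyValue C K s S) := by
  have hC' : KConvexOn K univ C := hC.kConvexOn_zero.mono_const hK
  have hmin' : ∀ x ∈ univ, C S ≤ C x := fun x _ => hmin x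
  refine ⟨(hC'.kConvexOn_sSPolicyValue hK (mem_univ s) hmin' hsS).mono_set (subset_univ A),
    fun a _ b _ => ?_⟩
  exact hC'.kQuasiMonotoneOn_sSPolicyValue hK (mem_univ s) (mem_univ S) hmin' hsS
    a (mem_univ a) b (mem_univ b)

end sSPolicy

def grid (θ : ℝ) : Set ℝ := {x | ∃ m : ℤ, x = m * θ}

section grid

variable {θ a b : ℝ}

lemma intCast_mul_mem_grid (m : ℤ) : (m : ℝ) * θ ∈ grid θ := ⟨m, rfl⟩

lemma sub_mem_grid (ha : a ∈ grid θ) (hb : b ∈ grid θ) : a - b ∈ grid θ := by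
  obtain ⟨m, rfl⟩ := ha
  obtain ⟨n, rfl⟩ := hb
  exact ⟨m - n, by push_cast; ring⟩

lemma add_le_of_lt_of_mem_grid (hθ : 0 < θ) (ha : a ∈ grid θ) (hb : b ∈ grid θ) (hab : a < b) :
    a + θ ≤ b := by
  obtain ⟨m, rfl⟩ := ha
  obtain ⟨n, rfl⟩ := hb
  have hmn : m + 1 ≤ n := by
    have : (m : ℝ) < n := lt_of_mul_lt_mul_right hab hθ.le
    exact_mod_cast this
  have : (m : ℝ) + 1 ≤ n := by exact_mod_cast hmn
  nlinarith

lemma exists_intCast_mul_lt_le (hθ : 0 < θ) (x : ℝ) :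
    ∃ n : ℤ, (n : ℝ) * θ < x ∧ x ≤ ((n : ℝ) + 1) * θ := by
  refine ⟨⌈x / θ⌉ - 1, ?_, ?_⟩
  · have := Int.ceil_lt_add_one (x / θ)
    push_cast
    rwa [← lt_div_iff₀ hθ, sub_lt_iff_lt_add]
  · have := Int.le_ceil (x / θ)
    push_cast
    rwa [sub_add_cancel, ← div_le_iff₀ hθ]

end grid

structure IsSubProbability (w : ℕ → ℝ) : Prop where
  nonneg : ∀ n, 0 ≤ w n
  summable : Summable w
  tsum_le_one : ∑' n, w n ≤ 1

lemma isSubProbability_increments {F : ℝ → ℝ} (hF : Monotone F) (hF0 : ∀ x, 0 ≤ F x)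
    (hF1 : ∀ x, F x ≤ 1) {u : ℕ → ℝ} (hu : Monotone u) :
    IsSubProbability fun n => F (u (n + 1)) - F (u n) := by
  have hnonneg : ∀ n, 0 ≤ F (u (n + 1)) - F (u n) :=
    fun n => sub_nonneg.mpr (hF (hu n.le_succ))
  have hpartial : ∀ N, ∑ n ∈ Finset.range N, (F (u (n + 1)) - F (u n)) ≤ 1 := by
    intro N
    rw [Finset.sum_range_sub (fun n => F (u n))]
    linarith [hF1 (u N), hF0 (u 0)]
  have hsum := summable_of_sum_range_le hnonneg hpartial
  exact ⟨hnonneg, hsum, hsum.tsum_le_of_sum_range_le hpartial⟩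

lemma isSubProbability_increments_of_cdf {μ : Measure ℝ} [IsProbabilityMeasure μ] {F : ℝ → ℝ}
    (hF : ∀ x, F x = (μ (Iic x)).toReal) {θ : ℝ} (hθ : 0 ≤ θ) {f : ℤ → ℝ}
    (hf : ∀ n : ℤ, f n = F (((n : ℝ) + 1) * θ) - F ((n : ℝ) * θ)) :
    IsSubProbability fun n : ℕ => f ((n : ℤ) - 1) := by
  have hFμ : F = ProbabilityTheory.cdf μ := funext fun x => by
    rw [hF, ProbabilityTheory.cdf_eq_real, measureReal_def]
  convert isSubProbability_increments (ProbabilityTheory.monotone_cdf μ)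
    (ProbabilityTheory.cdf_nonneg μ) (ProbabilityTheory.cdf_le_one μ)
    (u := fun n : ℕ => ((n : ℝ) - 1) * θ) (fun m n hmn => by dsimp only; gcongr) using 2 with n
  rw [hf, hFμ]
  push_cast
  ring_nf

section shiftedSum

variable {g : ℝ → ℝ} {d w : ℕ → ℝ}

lemma summable_comp_sub_mul_of_eqOn_Iio {s c : ℝ} (hg : ∀ x < s, g x = c)
    (hd : Tendsto d atTop atTop) (hw : Summable w) (y : ℝ) :
    Summable fun n => g (y - d n) * w n := by
  refine (hw.mul_left c).congr_atTop ?_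
  filter_upwards [hd.eventually_gt_atTop (y - s)] with n hn
  rw [hg _ (by linarith)]

lemma KConvexOn.tsum_comp_sub_mul {K : ℝ} {A : Set ℝ} (hg : KConvexOn K A g) (hK : 0 ≤ K)
    (hw : IsSubProbability w) (hd : ∀ x ∈ A, ∀ n, x - d n ∈ A)
    (hs : ∀ x ∈ A, Summable fun n => g (x - d n) * w n) :
    KConvexOn K A fun x => ∑' n, g (x - d n) * w n := by
  have h := KConvexOn.tsum (fun n => (hg.comp_sub_const (hd · · n)).mul_const (hw.nonneg n))
    (hw.summable.mul_left K) hs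
  refine h.mono_const ?_
  rw [tsum_mul_left]
  nlinarith [hw.tsum_le_one]

lemma tsum_comp_sub_mul_le_add {K a b : ℝ} (hK : 0 ≤ K) (hw : IsSubProbability w)
    (hab : ∀ n, g (a - d n) ≤ g (b - d n) + K) (ha : Summable fun n => g (a - d n) * w n)
    (hb : Summable fun n => g (b - d n) * w n) :
    ∑' n, g (a - d n) * w n ≤ ∑' n, g (b - d n) * w n + K := by
  have hKw : Summable fun n => K * w n := hw.summable.mul_left K
  calc ∑' n, g (a - d n) * w n ≤ ∑' n, (g (b - d n) * w n + K * w n) :=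
        ha.tsum_le_tsum (fun n => by nlinarith [hab n, hw.nonneg n]) (hb.add hKw)
    _ = ∑' n, g (b - d n) * w n + K * ∑' n, w n := by rw [hb.tsum_add hKw, tsum_mul_left]
    _ ≤ ∑' n, g (b - d n) * w n + K := by nlinarith [hw.tsum_le_one]

end shiftedSum

lemma isMinOn_of_isMinOn_inter_Icc {A : Set ℝ} {C G H : ℝ → ℝ} {α K K' Cm I m SU S : ℝ}
    (hC : ConvexOn ℝ univ C) (hCm : ∀ y, C Cm ≤ C y) (hα : 0 ≤ α) (hαK : α * K' ≤ K)
    (hH : ∀ y, H y = C y + α * G y)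
    (hGleft : ∀ x ≤ I, G x = G I) (hGright : ∀ b ∈ A, m ≤ b → G m ≤ G b + K')
    (hI : I ∈ A) (hICm : I < Cm) (hm : m ∈ A) (hIm : I ≤ m) (hmSU : m ≤ SU) (hCmSU : Cm ≤ SU)
    (hCSU : C m + K < C SU) (hS : IsMinOn H (A ∩ Icc I SU) S) : IsMinOn H A S := by
  rw [isMinOn_iff] at hS ⊢
  intro j hj
  rcases lt_or_ge j I with hjI | hIj
  · have hCj : C I ≤ C j :=
      hC.le_left_of_right_le'' (mem_univ j) (mem_univ Cm) hjI.le hICm (hCm I)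
    calc H S ≤ H I := hS I ⟨hI, le_rfl, hICm.le.trans hCmSU⟩
      _ ≤ H j := by rw [hH, hH, hGleft j hjI.le]; linarith
  rcases le_or_gt j SU with hjSU | hSUj
  · exact hS j ⟨hj, hIj, hjSU⟩
  have hCj : C SU ≤ C j := by
    rcases hCmSU.eq_or_lt with rfl | hCmSU
    · exact hCm j
    · exact hC.le_right_of_left_le'' (mem_univ _) (mem_univ _) hCmSU hSUj.le (hCm SU)
  have hG := mul_le_mul_of_nonneg_left (hGright j hj (hmSU.trans hSUj.le)) hα
  calc H S ≤ H m := hS m ⟨hm, hIm, hmSU⟩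
    _ ≤ H j := by rw [hH, hH]; nlinarith

lemma threshold_mem_grid_and_bounds {θ K Ibar I S s : ℝ} {C H : ℝ → ℝ} (hθ : 0 < θ)
    (hK : 0 ≤ K) (hIbar : IsGreatest {w | (∃ m : ℤ, w = m * θ) ∧ w ≤ I ∧ C I + K < C w} (Ibar - θ))
    (hI : I ∈ grid θ) (hIS : I ≤ S) (hS : S ∈ grid θ) (hs0 : K = 0 → s = S)
    (hs1 : 0 < K → IsLeast {w | (∃ m : ℤ, w = m * θ) ∧ Ibar ≤ w ∧ w ≤ S ∧ H w ≤ H S + K} s) :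
    s ∈ grid θ ∧ H s ≤ H S + K ∧ Ibar ≤ s := by
  rcases hK.eq_or_lt with hK0 | hKpos
  · rw [hs0 hK0.symm]
    obtain ⟨⟨hIbar_grid, hIbarI, hCI⟩, -⟩ := hIbar
    have hlt : Ibar - θ < I := lt_of_le_of_ne hIbarI (by rintro rfl; linarith)
    refine ⟨hS, by linarith, ?_⟩
    linarith [add_le_of_lt_of_mem_grid hθ hIbar_grid hI hlt]
  · obtain ⟨hs, hIbars, -, hsS⟩ := (hs1 hKpos).1
    exact ⟨hs, hsS, hIbars⟩

lemma isMinOn_and_kConvexOn_sSPolicyValue_of_recursion {θ α K K' Cm SU I S s s' c' : ℝ}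
    {C H V' : ℝ → ℝ} {w : ℕ → ℝ} (hθ : 0 < θ) (hα : 0 ≤ α) (hK : 0 ≤ K) (hK' : 0 ≤ K')
    (hαK : α * K' ≤ K) (hC : ConvexOn ℝ univ C) (hCm : ∀ y, C Cm ≤ C y) (hw : IsSubProbability w)
    (hV'conv : KConvexOn K' (grid θ) V') (hV'mono : KQuasiMonotoneOn K' (grid θ) V')
    (hV'left : ∀ x < s', V' x = c')
    (hH : ∀ y, H y = C y + α * ∑' n : ℕ, V' (y - ((n : ℝ) - 1) * θ) * w n)
    (hI : I ∈ grid θ) (hIs' : I + θ < s') (hICm : I < Cm)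
    (hSU : ∀ n0 : ℤ, (n0 : ℝ) * θ < Cm → Cm ≤ ((n0 : ℝ) + 1) * θ →
      IsLeast {w | (∃ m : ℤ, w = (m : ℝ) * θ) ∧ Cm ≤ w ∧ C ((n0 : ℝ) * θ) + K < C w} SU)
    (hS : S ∈ grid θ) (hSmin : ∀ u ∈ grid θ, I ≤ u → u ≤ SU → H S ≤ H u)
    (hs : s ∈ grid θ) (hsS : H s ≤ H S + K) :
    IsMinOn H (grid θ) S ∧ KConvexOn K (grid θ) (sSPolicyValue H K s S) ∧
      KQuasiMonotoneOn K (grid θ) (sSPolicyValue H K s S) := by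
  set d : ℕ → ℝ := fun n => ((n : ℝ) - 1) * θ
  set G : ℝ → ℝ := fun y => ∑' n, V' (y - d n) * w n
  have hd : ∀ x ∈ grid θ, ∀ n, x - d n ∈ grid θ := fun x hx n =>
    sub_mem_grid hx ⟨(n : ℤ) - 1, by push_cast; rfl⟩
  have hdtop : Tendsto d atTop atTop :=
    (tendsto_atTop_add_const_right _ (-1) tendsto_natCast_atTop_atTop).atTop_mul_const hθ
  have hsum : ∀ y, Summable fun n => V' (y - d n) * w n :=
    summable_comp_sub_mul_of_eqOn_Iio hV'left hdtop hw.summable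
  have hHconv : KConvexOn K (grid θ) H := by
    have h := (hC.kConvexOn_zero.mono_set (subset_univ _)).add
      ((hV'conv.tsum_comp_sub_mul hK' hw hd fun x _ => hsum x).const_mul hα)
    rw [zero_add] at h
    convert h.mono_const hαK using 1
    exact funext hH
  -- left of `I`, every argument of `V'` lies below `s'`
  have hGleft : ∀ x ≤ I, G x = G I := fun x hx => tsum_congr fun n => by
    have : 0 ≤ (n : ℝ) * θ := by positivity
    rw [hV'left, hV'left] <;> simp only [d] <;> nlinarith
  have hGright : ∀ a ∈ grid θ, ∀ b ∈ grid θ, a ≤ b → G a ≤ G b + K' := fun a ha b hb hab =>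
    tsum_comp_sub_mul_le_add hK' hw
      (fun n => hV'mono _ (hd a ha n) _ (hd b hb n) (by linarith)) (hsum a) (hsum b)
  obtain ⟨n0, hn0, hn0'⟩ := exists_intCast_mul_lt_le hθ Cm
  obtain ⟨-, hCmSU, hCSU⟩ := (hSU n0 hn0 hn0').1
  have hIn0 : I ≤ n0 * θ := by
    have := add_le_of_lt_of_mem_grid hθ hI (intCast_mul_mem_grid (n0 + 1)) (by push_cast; linarith)
    push_cast at this
    linarith
  have hmin : IsMinOn H (grid θ) S :=
    isMinOn_of_isMinOn_inter_Icc hC hCm hα hαK hH hGleft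
      (hGright _ (intCast_mul_mem_grid n0)) hI hICm (intCast_mul_mem_grid n0) hIn0
      (by linarith) hCmSU hCSU (isMinOn_iff.mpr fun u hu => hSmin u hu.1 hu.2.1 hu.2.2)
  have hminS := isMinOn_iff.mp hmin
  exact ⟨hmin, hHconv.kConvexOn_sSPolicyValue hK hs hminS hsS,
    hHconv.kQuasiMonotoneOn_sSPolicyValue hK hs hS hminS hsS⟩

theorem stmt5_general
    (T : ℕ)
    (α : ℝ) (hα0 : 0 < α)
    (K : ℕ → ℝ) (hK0 : ∀ t, t < T → 0 ≤ K t)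
    (hKmono : ∀ t, t + 2 ≤ T → α * K (t + 1) ≤ K t)
    (ν : ℕ → MeasureTheory.Measure ℝ)
    (hprob : ∀ t, MeasureTheory.IsProbabilityMeasure (ν t))
    (F : ℕ → ℝ → ℝ) (hF : ∀ t x, F t x = (ν t (Set.Iic x)).toReal)
    (C : ℕ → ℝ → ℝ)
    (hCconv : ∀ t, t < T → ConvexOn ℝ Set.univ (C t))
    (θ : ℝ) (hθ : 0 < θ)
    (f : ℕ → ℤ → ℝ)
    (hf : ∀ t (n : ℤ), f t n = F t (((n : ℝ) + 1) * θ) - F t ((n : ℝ) * θ))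
    (Cm SU : ℕ → ℝ)
    (hCm : ∀ t, t < T → IsLeast {x | ∀ y, C t x ≤ C t y} (Cm t))
    (hSU : ∀ t, t < T → ∀ n0 : ℤ, (n0 : ℝ) * θ < Cm t → Cm t ≤ ((n0 : ℝ) + 1) * θ →
      IsLeast {w | (∃ m : ℤ, w = (m : ℝ) * θ) ∧ Cm t ≤ w ∧ C t ((n0 : ℝ) * θ) + K t < C t w} (SU t))
    (s S : ℕ → ℝ) (I Ibar : ℕ → ℝ)
    (hsT1b : C (T - 1) (s (T - 1)) = C (T - 1) (Cm (T - 1)) + K (T - 1))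
    (hIbarT1 : Ibar (T - 1) = s (T - 1))
    (hI : ∀ t, t + 2 ≤ T →
      IsGreatest {w | (∃ m : ℤ, w = (m : ℝ) * θ) ∧ w < min (Ibar (t + 1) - θ) (Cm t)} (I t))
    (hIbar : ∀ t, t + 2 ≤ T →
      IsGreatest {w | (∃ m : ℤ, w = (m : ℝ) * θ) ∧ w ≤ I t ∧ C t (I t) + K t < C t w} (Ibar t - θ))
    (H V : ℕ → ℝ → ℝ)
    (hHT1 : ∀ y, H (T - 1) y = C (T - 1) y)
    (hST1 : S (T - 1) = Cm (T - 1))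
    (hV : ∀ t, t < T → ∀ y, V t y = if y < s t then H t (S t) + K t else H t y)
    (hHrec : ∀ t, t + 2 ≤ T → ∀ y,
      H t y = C t y + α * ∑' n : ℕ, V (t + 1) (y - ((n : ℝ) - 1) * θ) * f t ((n : ℤ) - 1))
    (hSdef : ∀ t, t + 2 ≤ T →
      IsGreatest {w | (∃ m : ℤ, w = (m : ℝ) * θ) ∧ I t ≤ w ∧ w ≤ SU t ∧
        ∀ u, (∃ n : ℤ, u = (n : ℝ) * θ) → I t ≤ u → u ≤ SU t → H t w ≤ H t u} (S t))
    (hsdef0 : ∀ t, t + 2 ≤ T → K t = 0 → s t = S t)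
    (hsdef1 : ∀ t, t + 2 ≤ T → 0 < K t →
      IsLeast {w | (∃ m : ℤ, w = (m : ℝ) * θ) ∧ Ibar t ≤ w ∧ w ≤ S t ∧ H t w ≤ H t (S t) + K t} (s t))
    :
    ∀ t, t < T → ∀ j : ℤ, H t (S t) ≤ H t ((j : ℝ) * θ) := by
  intro t₀ ht₀ j
  have hw : ∀ t, IsSubProbability fun n : ℕ => f t ((n : ℤ) - 1) :=
    fun t => isSubProbability_increments_of_cdf (hF t) hθ.le (hf t)
  have hthreshold : ∀ t, t + 2 ≤ T → s t ∈ grid θ ∧ H t (s t) ≤ H t (S t) + K t ∧ Ibar t ≤ s t :=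
    fun t ht => threshold_mem_grid_and_bounds hθ (hK0 t (by omega)) (hIbar t ht) (hI t ht).1.1
      (hSdef t ht).1.2.1 (hSdef t ht).1.1 (hsdef0 t ht) (hsdef1 t ht)
  have hIbar_le : ∀ t, t + 2 ≤ T → Ibar (t + 1) ≤ s (t + 1) := by
    intro t ht
    rcases (by omega : t + 3 ≤ T ∨ T - 1 = t + 1) with h | h
    · exact (hthreshold (t + 1) h).2.2
    · rw [← h, hIbarT1]
  have hstage : ∀ t ≤ T - 1, IsMinOn (H t) (grid θ) (S t) ∧ KConvexOn (K t) (grid θ) (V t) ∧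
      KQuasiMonotoneOn (K t) (grid θ) (V t) := by
    intro t ht
    induction ht using Nat.decreasingInduction with
    | self =>
      have hT1 : T - 1 < T := by omega
      have hVT : V (T - 1) = sSPolicyValue (C (T - 1)) (K (T - 1)) (s (T - 1)) (Cm (T - 1)) :=
        funext fun y => by rw [hV _ hT1, hHT1, hHT1, hST1]; rfl
      rw [hVT, funext hHT1, hST1]
      exact ⟨isMinOn_iff.mpr fun x _ => (hCm _ hT1).1 x,
        (hCconv _ hT1).kConvexOn_and_kQuasiMonotoneOn_sSPolicyValue (hK0 _ hT1) (hCm _ hT1).1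
          hsT1b.le _⟩
    | of_succ t ht ih =>
      have ht2 : t + 2 ≤ T := by omega
      obtain ⟨-, hVconv, hVmono⟩ := ih
      obtain ⟨hIgrid, hIlt⟩ := (hI t ht2).1
      rw [lt_min_iff] at hIlt
      obtain ⟨hs, hsS, -⟩ := hthreshold t ht2
      obtain ⟨hSgrid, -, -, hSmin⟩ := (hSdef t ht2).1
      have hVt : V t = sSPolicyValue (H t) (K t) (s t) (S t) := funext (hV t (by omega))
      rw [hVt]
      exact isMinOn_and_kConvexOn_sSPolicyValue_of_recursion hθ hα0.le (hK0 t (by omega))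
        (hK0 (t + 1) (by omega)) (hKmono t ht2) (hCconv t (by omega)) (hCm t (by omega)).1 (hw t)
        hVconv hVmono (fun x hx => by rw [hV (t + 1) (by omega), if_pos hx]) (hHrec t ht2)
        hIgrid (by linarith [hIbar_le t ht2]) hIlt.2 (hSU t (by omega)) hSgrid hSmin hs hsS
  exact isMinOn_iff.mp (hstage t₀ (by omega)).1 _ (intCast_mul_mem_grid j)

theorem stmt5
    (T : ℕ) (hT : 2 ≤ T)
    (α : ℝ) (hα0 : 0 < α) (hα1 : α ≤ 1)
    (K : ℕ → ℝ) (hK0 : ∀ t, t < T → 0 ≤ K t)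
    (hKmono : ∀ t, t + 2 ≤ T → α * K (t + 1) ≤ K t)
    (ν : ℕ → MeasureTheory.Measure ℝ)
    (hprob : ∀ t, MeasureTheory.IsProbabilityMeasure (ν t))
    (hpos : ∀ t, ν t (Set.Iio 0) = 0)
    (F : ℕ → ℝ → ℝ) (hF : ∀ t x, F t x = (ν t (Set.Iic x)).toReal)
    (C : ℕ → ℝ → ℝ)
    (hCconv : ∀ t, t < T → ConvexOn ℝ Set.univ (C t))
    (hCcoer : ∀ t, t < T → Filter.Tendsto (C t) (Filter.cocompact ℝ) Filter.atTop)
    (θ : ℝ) (hθ : 0 < θ)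
    (f : ℕ → ℤ → ℝ)
    (hf : ∀ t (n : ℤ), f t n = F t (((n : ℝ) + 1) * θ) - F t ((n : ℝ) * θ))
    (Cm SU : ℕ → ℝ)
    (hCm : ∀ t, t < T → IsLeast {x | ∀ y, C t x ≤ C t y} (Cm t))
    (hSU : ∀ t, t < T → ∀ n0 : ℤ, (n0 : ℝ) * θ < Cm t → Cm t ≤ ((n0 : ℝ) + 1) * θ →
      IsLeast {w | (∃ m : ℤ, w = (m : ℝ) * θ) ∧ Cm t ≤ w ∧ C t ((n0 : ℝ) * θ) + K t < C t w} (SU t))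
    (s S : ℕ → ℝ) (I Ibar : ℕ → ℝ)
    (hsT1a : s (T - 1) ≤ Cm (T - 1))
    (hsT1b : C (T - 1) (s (T - 1)) = C (T - 1) (Cm (T - 1)) + K (T - 1))
    (hIbarT1 : Ibar (T - 1) = s (T - 1))
    (hI : ∀ t, t + 2 ≤ T →
      IsGreatest {w | (∃ m : ℤ, w = (m : ℝ) * θ) ∧ w < min (Ibar (t + 1) - θ) (Cm t)} (I t))
    (hIbar : ∀ t, t + 2 ≤ T →
      IsGreatest {w | (∃ m : ℤ, w = (m : ℝ) * θ) ∧ w ≤ I t ∧ C t (I t) + K t < C t w} (Ibar t - θ))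
    (H V : ℕ → ℝ → ℝ)
    (hHT1 : ∀ y, H (T - 1) y = C (T - 1) y)
    (hST1 : S (T - 1) = Cm (T - 1))
    (hV : ∀ t, t < T → ∀ y, V t y = if y < s t then H t (S t) + K t else H t y)
    (hHrec : ∀ t, t + 2 ≤ T → ∀ y,
      H t y = C t y + α * ∑' n : ℕ, V (t + 1) (y - ((n : ℝ) - 1) * θ) * f t ((n : ℤ) - 1))
    (hSdef : ∀ t, t + 2 ≤ T →
      IsGreatest {w | (∃ m : ℤ, w = (m : ℝ) * θ) ∧ I t ≤ w ∧ w ≤ SU t ∧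
        ∀ u, (∃ n : ℤ, u = (n : ℝ) * θ) → I t ≤ u → u ≤ SU t → H t w ≤ H t u} (S t))
    (hsdef0 : ∀ t, t + 2 ≤ T → K t = 0 → s t = S t)
    (hsdef1 : ∀ t, t + 2 ≤ T → 0 < K t →
      IsLeast {w | (∃ m : ℤ, w = (m : ℝ) * θ) ∧ Ibar t ≤ w ∧ w ≤ S t ∧ H t w ≤ H t (S t) + K t} (s t))
    :
    ∀ t, t < T → ∀ j : ℤ, H t (S t) ≤ H t ((j : ℝ) * θ) :=
  stmt5_general T α hα0 K hK0 hKmono ν hprob F hF C hCconv θ hθ f hf Cm SU hCm hSU s S I Ibar hsT1b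
    hIbarT1 hI hIbar H V hHT1 hST1 hV hHrec hSdef hsdef0 hsdef1
end

section
/- For every t = 0,…,T−1 and every x ∈ ℝ, the cost of the approximate policy satisfies v^{s,S}_t(x) = V_t(x) − c_t·x + ε_t(x), where ε_{T−1} :≡ 0. -/
/-!
Both sides satisfy the same backward recursion. Substituting the induction hypothesis
`v_{t+1} = V_{t+1} - c_{t+1} x + ε_{t+1}` into the recursion for `v_t`, the expectation splits
termwise, because `V_{t+1}` and `ε_{t+1}` are measurable and bounded on every half-line
`(-∞, a]` while the demand is nonnegative. The terms `α c_{t+1} E[D_t]` and the discretised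
expectation hidden in `H_t` then cancel against `C_t` and `A_{t+1}`, leaving the recursion of `ε_t`.
-/

open MeasureTheory Set Finset ProbabilityTheory

theorem forall_lt_of_last_of_step {T : ℕ} {P : ℕ → Prop} (hlast : 0 < T → P (T - 1))
    (hstep : ∀ t, t + 2 ≤ T → P (t + 1) → P t) : ∀ t < T, P t := fun t ht =>
  Nat.decreasingInduction (motive := fun m _ => P m) (fun k hk => hstep k (by omega))
    (hlast (by omega)) (by omega : t ≤ T - 1)

/-- The functions `g` for which `E[g (y - D)]` is finite for every `y` and every
nonnegative random variable `D`. -/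
structure LeftBounded (g : ℝ → ℝ) : Prop where
  measurable : Measurable g
  bound : ∀ a, ∃ M, ∀ z ≤ a, |g z| ≤ M

namespace LeftBounded

variable {g h : ℝ → ℝ}

theorem const (c : ℝ) : LeftBounded fun _ => c :=
  ⟨measurable_const, fun _ => ⟨|c|, fun _ _ => le_rfl⟩⟩

theorem congr (hg : LeftBounded g) (h_eq : ∀ y, h y = g y) : LeftBounded h :=
  funext h_eq ▸ hg

theorem add (hg : LeftBounded g) (hh : LeftBounded h) : LeftBounded fun y => g y + h y := by
  refine ⟨hg.measurable.add hh.measurable, fun a => ?_⟩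
  obtain ⟨M, hM⟩ := hg.bound a
  obtain ⟨N, hN⟩ := hh.bound a
  exact ⟨M + N, fun z hz => (abs_add_le _ _).trans (add_le_add (hM z hz) (hN z hz))⟩

theorem sub (hg : LeftBounded g) (hh : LeftBounded h) : LeftBounded fun y => g y - h y := by
  refine ⟨hg.measurable.sub hh.measurable, fun a => ?_⟩
  obtain ⟨M, hM⟩ := hg.bound a
  obtain ⟨N, hN⟩ := hh.bound a
  exact ⟨M + N, fun z hz => (abs_sub _ _).trans (add_le_add (hM z hz) (hN z hz))⟩

theorem const_mul (hg : LeftBounded g) (c : ℝ) : LeftBounded fun y => c * g y := by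
  refine ⟨hg.measurable.const_mul c, fun a => ?_⟩
  obtain ⟨M, hM⟩ := hg.bound a
  exact ⟨|c| * M, fun z hz => by
    rw [abs_mul]; exact mul_le_mul_of_nonneg_left (hM z hz) (abs_nonneg c)⟩

theorem ite_lt_of_boundedOn_Icc {s c : ℝ} (hm : Measurable g)
    (hb : ∀ a, ∃ M, ∀ z ∈ Icc s a, |g z| ≤ M) : LeftBounded fun y => if y < s then c else g y := by
  refine ⟨Measurable.ite measurableSet_Iio measurable_const hm, fun a => ?_⟩
  obtain ⟨M, hM⟩ := hb a
  refine ⟨max |c| M, fun z hz => ?_⟩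
  split_ifs with hzs
  · exact le_max_left _ _
  · exact (hM z ⟨not_lt.1 hzs, hz⟩).trans (le_max_right _ _)

theorem ite_lt {s c : ℝ} {E : ℝ → ℝ} (hg : LeftBounded g)
    (hE : ∀ y, E y = if y < s then c else g y) : LeftBounded E :=
  (ite_lt_of_boundedOn_Icc hg.measurable fun a =>
    (hg.bound a).imp fun _ hM z hz => hM z hz.2).congr hE

/-- The continuous part `g` may be unbounded left of `s`: only its values on `[s, a]` matter. -/
theorem ite_lt_of_continuous_add {s c : ℝ} {H V : ℝ → ℝ} (hg : Continuous g)
    (hh : LeftBounded h) (hH : ∀ y, H y = g y + h y)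
    (hV : ∀ y, V y = if y < s then c else H y) : LeftBounded V := by
  have hHm : Measurable H := funext hH ▸ hg.measurable.add hh.measurable
  refine (ite_lt_of_boundedOn_Icc hHm fun a => ?_).congr hV
  obtain ⟨M, hM⟩ := isCompact_Icc.exists_bound_of_continuousOn (s := Icc s a) hg.continuousOn
  obtain ⟨N, hN⟩ := hh.bound a
  exact ⟨M + N, fun z hz => by
    rw [hH]; exact (abs_add_le _ _).trans (add_le_add (hM z hz) (hN z hz.2))⟩

section Demand

variable {μ : Measure ℝ}

theorem ae_abs_comp_sub_le (hμ : ∀ᵐ ξ ∂μ, 0 ≤ ξ) {y M : ℝ} (hM : ∀ z ≤ y, |g z| ≤ M) :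
    ∀ᵐ ξ ∂μ, ‖g (y - ξ)‖ ≤ M := by
  filter_upwards [hμ] with ξ hξ
  exact hM _ (by linarith)

theorem integrable_comp_sub [IsFiniteMeasure μ] (hμ : ∀ᵐ ξ ∂μ, 0 ≤ ξ) (hg : LeftBounded g)
    (y : ℝ) : Integrable (fun ξ => g (y - ξ)) μ := by
  obtain ⟨M, hM⟩ := hg.bound y
  exact (integrable_const M).mono'
    (hg.measurable.comp (measurable_const.sub measurable_id)).aestronglyMeasurable
    (ae_abs_comp_sub_le hμ hM)

theorem integral_comp_sub [IsFiniteMeasure μ] (hμ : ∀ᵐ ξ ∂μ, 0 ≤ ξ)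
    (hg : LeftBounded g) : LeftBounded fun y => ∫ ξ, g (y - ξ) ∂μ := by
  refine ⟨(hg.measurable.comp (measurable_fst.sub measurable_snd)).stronglyMeasurable
    |>.integral_prod_right'.measurable, fun a => ?_⟩
  obtain ⟨M, hM⟩ := hg.bound a
  exact ⟨M * μ.real univ, fun z hz =>
    norm_integral_le_of_norm_le_const (ae_abs_comp_sub_le hμ fun w hw => hM w (hw.trans hz))⟩

end Demand

end LeftBounded

section Series

variable {q e : ℕ → ℝ} {b : ℝ} {W : ℝ → ℝ}

theorem norm_comp_sub_mul_le (hq0 : ∀ n, 0 ≤ q n) (he : ∀ n, b ≤ e n) {a M : ℝ}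
    (hM : ∀ z ≤ a - b, |W z| ≤ M) {z : ℝ} (hz : z ≤ a) (n : ℕ) :
    ‖W (z - e n) * q n‖ ≤ |M| * q n := by
  rw [Real.norm_eq_abs, abs_mul, abs_of_nonneg (hq0 n)]
  exact mul_le_mul_of_nonneg_right
    ((hM _ (by linarith [he n])).trans (le_abs_self M)) (hq0 n)

theorem summable_comp_sub_mul (hq0 : ∀ n, 0 ≤ q n) (hq1 : ∀ N, ∑ n ∈ range N, q n ≤ 1)
    (he : ∀ n, b ≤ e n) (hW : LeftBounded W) (z : ℝ) :
    Summable fun n => W (z - e n) * q n := by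
  obtain ⟨M, hM⟩ := hW.bound (z - b)
  exact ((summable_of_sum_range_le hq0 hq1).mul_left |M|).of_norm_bounded
    (norm_comp_sub_mul_le hq0 he hM le_rfl)

theorem LeftBounded.tsum_comp_sub_mul (hq0 : ∀ n, 0 ≤ q n) (hq1 : ∀ N, ∑ n ∈ range N, q n ≤ 1)
    (he : ∀ n, b ≤ e n) (hW : LeftBounded W) :
    LeftBounded fun z => ∑' n, W (z - e n) * q n := by
  refine ⟨measurable_of_tendsto_metrizable (fun N => Finset.measurable_sum _ fun n _ =>
      (hW.measurable.comp (measurable_id.sub measurable_const)).mul_const _)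
    (tendsto_pi_nhds.2 fun z => (summable_comp_sub_mul hq0 hq1 he hW z).hasSum.tendsto_sum_nat),
    fun a => ?_⟩
  obtain ⟨M, hM⟩ := hW.bound (a - b)
  refine ⟨|M|, fun z hz => ?_⟩
  calc |∑' n, W (z - e n) * q n|
      ≤ |M| * ∑' n, q n :=
        tsum_of_norm_bounded ((summable_of_sum_range_le hq0 hq1).hasSum.mul_left |M|)
          (norm_comp_sub_mul_le hq0 he hM hz)
    _ ≤ |M| := mul_le_of_le_one_right (abs_nonneg M) (Real.tsum_le_of_sum_range_le hq0 hq1)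

end Series

theorem increments_nonneg_and_sum_le_one {F : ℝ → ℝ} (hF : Monotone F) (hF0 : ∀ x, 0 ≤ F x)
    (hF1 : ∀ x, F x ≤ 1) {x : ℕ → ℝ} (hx : Monotone x) {q : ℕ → ℝ}
    (hq : ∀ n, q n = F (x (n + 1)) - F (x n)) :
    (∀ n, 0 ≤ q n) ∧ ∀ N, ∑ n ∈ range N, q n ≤ 1 := by
  refine ⟨fun n => by rw [hq]; exact sub_nonneg.2 (hF (hx n.le_succ)), fun N => ?_⟩
  rw [Finset.sum_congr rfl fun n _ => hq n, Finset.sum_range_sub (fun n => F (x n))]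
  linarith [hF1 (x N), hF0 (x 0)]

theorem grid_increments_nonneg_and_sum_le_one {μ : Measure ℝ} [IsProbabilityMeasure μ] {θ : ℝ}
    (hθ : 0 ≤ θ) {p : ℤ → ℝ}
    (hp : ∀ n : ℤ, p n = μ.real (Iic ((n + 1) * θ)) - μ.real (Iic (n * θ))) :
    (∀ n : ℕ, 0 ≤ p (n - 1)) ∧ ∀ N, ∑ n ∈ range N, p ((n : ℤ) - 1) ≤ 1 :=
  increments_nonneg_and_sum_le_one (cdf μ).mono (cdf_nonneg μ) (cdf_le_one μ)
    (x := fun n : ℕ => ((n : ℝ) - 1) * θ) (fun m n hmn => by dsimp only; gcongr) fun n => by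
      rw [hp, cdf_eq_real, cdf_eq_real]; push_cast; ring_nf

theorem integral_comp_sub_eq_of_eq {μ : Measure ℝ} [IsProbabilityMeasure μ]
    (hμ : ∀ᵐ ξ ∂μ, 0 ≤ ξ) (hD : Integrable (fun ξ : ℝ => ξ) μ) {v W e : ℝ → ℝ} {c : ℝ}
    (hW : LeftBounded W) (he : LeftBounded e) (hv : ∀ x, v x = W x - c * x + e x) (y : ℝ) :
    ∫ ξ, v (y - ξ) ∂μ = ∫ ξ, W (y - ξ) ∂μ - c * (y - ∫ ξ, ξ ∂μ) + ∫ ξ, e (y - ξ) ∂μ := by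
  have hW' := hW.integrable_comp_sub hμ y
  have hlin : Integrable (fun ξ => c * (y - ξ)) μ := ((integrable_const y).sub hD).const_mul c
  have hWlin : Integrable (fun ξ => W (y - ξ) - c * (y - ξ)) μ := hW'.sub hlin
  simp_rw [hv]
  rw [integral_add hWlin (he.integrable_comp_sub hμ y), integral_sub hW' hlin, integral_const_mul,
    integral_sub (integrable_const y) hD, integral_const, probReal_univ, one_smul]

theorem leftBounded_value_and_error {T : ℕ} {α b : ℝ} {K s S e : ℕ → ℝ} {ν : ℕ → Measure ℝ}
    [∀ t, IsFiniteMeasure (ν t)] (hν : ∀ t, ∀ᵐ ξ ∂(ν t), 0 ≤ ξ) {q : ℕ → ℕ → ℝ}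
    (hq0 : ∀ t n, 0 ≤ q t n) (hq1 : ∀ t N, ∑ n ∈ range N, q t n ≤ 1) (he : ∀ n, b ≤ e n)
    {C H V A eps : ℕ → ℝ → ℝ} (hC : ∀ t < T, Continuous (C t))
    (hHT1 : ∀ y, H (T - 1) y = C (T - 1) y)
    (hV : ∀ t, t < T → ∀ y, V t y = if y < s t then H t (S t) + K t else H t y)
    (hHrec : ∀ t, t + 2 ≤ T → ∀ y, H t y = C t y + α * ∑' n, V (t + 1) (y - e n) * q t n)
    (hA : ∀ t, t + 2 ≤ T → ∀ x,
      A (t + 1) x = (∫ ξ, V (t + 1) (x - ξ) ∂(ν t)) - ∑' n, V (t + 1) (x - e n) * q t n)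
    (hepsT1 : ∀ x, eps (T - 1) x = 0)
    (heps : ∀ t, t + 2 ≤ T → ∀ x, eps t x =
      if x < s t then α * A (t + 1) (S t) + α * ∫ ξ, eps (t + 1) (S t - ξ) ∂(ν t)
      else α * A (t + 1) x + α * ∫ ξ, eps (t + 1) (x - ξ) ∂(ν t)) :
    ∀ t < T, LeftBounded (V t) ∧ LeftBounded (eps t) := by
  refine forall_lt_of_last_of_step (fun hT0 => ?_) fun t ht ⟨hV1, heps1⟩ => ?_
  · have hT : T - 1 < T := by omega
    exact ⟨.ite_lt_of_continuous_add (hC _ hT) (.const 0) (fun y => by simp [hHT1]) (hV _ hT),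
      (LeftBounded.const 0).congr hepsT1⟩
  · have hseries := hV1.tsum_comp_sub_mul (hq0 t) (hq1 t) he
    have hAt : LeftBounded (A (t + 1)) :=
      ((hV1.integral_comp_sub (hν t)).sub hseries).congr (hA t ht)
    exact ⟨.ite_lt_of_continuous_add (hC t (by omega)) (hseries.const_mul α) (hHrec t ht)
        (hV t (by omega)),
      ((hAt.const_mul α).add ((heps1.integral_comp_sub (hν t)).const_mul α)).ite_lt (heps t ht)⟩

theorem stmt6_general
    (T : ℕ)
    (α : ℝ)
    (K : ℕ → ℝ)
    (ν : ℕ → MeasureTheory.Measure ℝ)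
    (hprob : ∀ t, MeasureTheory.IsProbabilityMeasure (ν t))
    (hpos : ∀ t, ν t (Set.Iio 0) = 0)
    (F : ℕ → ℝ → ℝ) (hF : ∀ t x, F t x = (ν t (Set.Iic x)).toReal)
    (C : ℕ → ℝ → ℝ)
    (hCconv : ∀ t, t < T → ConvexOn ℝ Set.univ (C t))
    (θ : ℝ) (hθ : 0 < θ)
    (f : ℕ → ℤ → ℝ)
    (hf : ∀ t (n : ℤ), f t n = F t (((n : ℝ) + 1) * θ) - F t ((n : ℝ) * θ))
    (s S : ℕ → ℝ)
    (H V : ℕ → ℝ → ℝ)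
    (hHT1 : ∀ y, H (T - 1) y = C (T - 1) y)
    (hV : ∀ t, t < T → ∀ y, V t y = if y < s t then H t (S t) + K t else H t y)
    (hHrec : ∀ t, t + 2 ≤ T → ∀ y,
      H t y = C t y + α * ∑' n : ℕ, V (t + 1) (y - ((n : ℝ) - 1) * θ) * f t ((n : ℤ) - 1))
    (c : ℕ → ℝ) (G : ℕ → ℝ → ℝ)
    (hDint : ∀ t, t < T → MeasureTheory.Integrable (fun ξ : ℝ => ξ) (ν t))
    (hCdef : ∀ t, t < T → ∀ y,
      C t y = (c t - α * c (t + 1)) * y + G t y + α * c (t + 1) * ∫ ξ, ξ ∂(ν t))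
    (vsS : ℕ → ℝ → ℝ)
    (hvsST : ∀ x, vsS T x = -(c T) * x)
    (hvsSRec : ∀ t, t < T → ∀ x, vsS t x =
      (if x < s t then K t else 0)
        + c t * ((if x < s t then S t else x) - x)
        + G t (if x < s t then S t else x)
        + α * ∫ ξ, vsS (t + 1) ((if x < s t then S t else x) - ξ) ∂(ν t))
    (A : ℕ → ℝ → ℝ)
    (hA : ∀ t, 1 ≤ t → t < T → ∀ x, A t x =
      (∫ ξ, V t (x - ξ) ∂(ν (t - 1)))
        - ∑' n : ℕ, V t (x - ((n : ℝ) - 1) * θ) * f (t - 1) ((n : ℤ) - 1))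
    (eps : ℕ → ℝ → ℝ)
    (hepsT1 : ∀ x, eps (T - 1) x = 0)
    (heps : ∀ t, t + 2 ≤ T → ∀ x, eps t x =
      if x < s t then α * A (t + 1) (S t) + α * ∫ ξ, eps (t + 1) (S t - ξ) ∂(ν t)
      else α * A (t + 1) x + α * ∫ ξ, eps (t + 1) (x - ξ) ∂(ν t))
    :
    ∀ t, t < T → ∀ x, vsS t x = V t x - c t * x + eps t x := by
  have hν : ∀ t, ∀ᵐ ξ ∂(ν t), 0 ≤ ξ := fun t =>
    ae_iff.2 (by simp only [not_le]; exact hpos t)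
  have hC : ∀ t < T, Continuous (C t) := fun t ht =>
    continuousOn_univ.1 ((hCconv t ht).continuousOn isOpen_univ)
  have hgrid : ∀ n : ℕ, -θ ≤ ((n : ℝ) - 1) * θ := fun n => by
    nlinarith [(Nat.cast_nonneg n : (0 : ℝ) ≤ n)]
  have hq : ∀ t, (∀ n : ℕ, 0 ≤ f t ((n : ℤ) - 1)) ∧
      ∀ N, ∑ n ∈ range N, f t ((n : ℤ) - 1) ≤ 1 := fun t =>
    grid_increments_nonneg_and_sum_le_one hθ.le fun n => by rw [hf, hF, hF]; rfl
  have hA' : ∀ t, t + 2 ≤ T → ∀ x, A (t + 1) x = (∫ ξ, V (t + 1) (x - ξ) ∂(ν t))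
      - ∑' n : ℕ, V (t + 1) (x - ((n : ℝ) - 1) * θ) * f t ((n : ℤ) - 1) := fun t ht =>
    hA (t + 1) (by omega) (by omega)
  have hreg := leftBounded_value_and_error hν (fun t => (hq t).1) (fun t => (hq t).2) hgrid hC hHT1
    hV hHrec hA' hepsT1 heps
  refine forall_lt_of_last_of_step (fun hT0 x => ?_) fun t ht hid x => ?_
  · have hT : T - 1 < T := by omega
    have hT1 : T - 1 + 1 = T := by omega
    -- the terminal cost is linear, i.e. of the form `V - c x + ε` with `V = ε = 0`
    have hexp := integral_comp_sub_eq_of_eq (hν (T - 1)) (hDint _ hT) (.const 0) (.const 0)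
      (v := vsS T) (c := c T) fun x => by rw [hvsST]; ring
    rw [hvsSRec _ hT, hT1, hexp, hV _ hT, hepsT1]
    split_ifs <;> simp only [hHT1, hCdef _ hT, hT1, integral_zero] <;> ring
  · have hexp := integral_comp_sub_eq_of_eq (hν t) (hDint t (by omega)) (hreg (t + 1) (by omega)).1
      (hreg (t + 1) (by omega)).2 hid
    rw [hvsSRec t (by omega), hexp, hV t (by omega), heps t ht]
    split_ifs <;> rw [hHrec t ht, hA' t ht, hCdef t (by omega)] <;> ring

theorem stmt6
    (T : ℕ) (hT : 2 ≤ T)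
    (α : ℝ) (hα0 : 0 < α) (hα1 : α ≤ 1)
    (K : ℕ → ℝ) (hK0 : ∀ t, t < T → 0 ≤ K t)
    (hKmono : ∀ t, t + 2 ≤ T → α * K (t + 1) ≤ K t)
    (ν : ℕ → MeasureTheory.Measure ℝ)
    (hprob : ∀ t, MeasureTheory.IsProbabilityMeasure (ν t))
    (hpos : ∀ t, ν t (Set.Iio 0) = 0)
    (F : ℕ → ℝ → ℝ) (hF : ∀ t x, F t x = (ν t (Set.Iic x)).toReal)
    (C : ℕ → ℝ → ℝ)
    (hCconv : ∀ t, t < T → ConvexOn ℝ Set.univ (C t))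
    (hCcoer : ∀ t, t < T → Filter.Tendsto (C t) (Filter.cocompact ℝ) Filter.atTop)
    (θ : ℝ) (hθ : 0 < θ)
    (f : ℕ → ℤ → ℝ)
    (hf : ∀ t (n : ℤ), f t n = F t (((n : ℝ) + 1) * θ) - F t ((n : ℝ) * θ))
    (Cm SU : ℕ → ℝ)
    (hCm : ∀ t, t < T → IsLeast {x | ∀ y, C t x ≤ C t y} (Cm t))
    (hSU : ∀ t, t < T → ∀ n0 : ℤ, (n0 : ℝ) * θ < Cm t → Cm t ≤ ((n0 : ℝ) + 1) * θ →
      IsLeast {w | (∃ m : ℤ, w = (m : ℝ) * θ) ∧ Cm t ≤ w ∧ C t ((n0 : ℝ) * θ) + K t < C t w} (SU t))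
    (s S : ℕ → ℝ) (I Ibar : ℕ → ℝ)
    (hsT1a : s (T - 1) ≤ Cm (T - 1))
    (hsT1b : C (T - 1) (s (T - 1)) = C (T - 1) (Cm (T - 1)) + K (T - 1))
    (hIbarT1 : Ibar (T - 1) = s (T - 1))
    (hI : ∀ t, t + 2 ≤ T →
      IsGreatest {w | (∃ m : ℤ, w = (m : ℝ) * θ) ∧ w < min (Ibar (t + 1) - θ) (Cm t)} (I t))
    (hIbar : ∀ t, t + 2 ≤ T →
      IsGreatest {w | (∃ m : ℤ, w = (m : ℝ) * θ) ∧ w ≤ I t ∧ C t (I t) + K t < C t w} (Ibar t - θ))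
    (H V : ℕ → ℝ → ℝ)
    (hHT1 : ∀ y, H (T - 1) y = C (T - 1) y)
    (hST1 : S (T - 1) = Cm (T - 1))
    (hV : ∀ t, t < T → ∀ y, V t y = if y < s t then H t (S t) + K t else H t y)
    (hHrec : ∀ t, t + 2 ≤ T → ∀ y,
      H t y = C t y + α * ∑' n : ℕ, V (t + 1) (y - ((n : ℝ) - 1) * θ) * f t ((n : ℤ) - 1))
    (hSdef : ∀ t, t + 2 ≤ T →
      IsGreatest {w | (∃ m : ℤ, w = (m : ℝ) * θ) ∧ I t ≤ w ∧ w ≤ SU t ∧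
        ∀ u, (∃ n : ℤ, u = (n : ℝ) * θ) → I t ≤ u → u ≤ SU t → H t w ≤ H t u} (S t))
    (hsdef0 : ∀ t, t + 2 ≤ T → K t = 0 → s t = S t)
    (hsdef1 : ∀ t, t + 2 ≤ T → 0 < K t →
      IsLeast {w | (∃ m : ℤ, w = (m : ℝ) * θ) ∧ Ibar t ≤ w ∧ w ≤ S t ∧ H t w ≤ H t (S t) + K t} (s t))
    (c : ℕ → ℝ) (G : ℕ → ℝ → ℝ)
    (hDint : ∀ t, t < T → MeasureTheory.Integrable (fun ξ : ℝ => ξ) (ν t))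
    (hCdef : ∀ t, t < T → ∀ y,
      C t y = (c t - α * c (t + 1)) * y + G t y + α * c (t + 1) * ∫ ξ, ξ ∂(ν t))
    (vsS : ℕ → ℝ → ℝ)
    (hvsST : ∀ x, vsS T x = -(c T) * x)
    (hvsSRec : ∀ t, t < T → ∀ x, vsS t x =
      (if x < s t then K t else 0)
        + c t * ((if x < s t then S t else x) - x)
        + G t (if x < s t then S t else x)
        + α * ∫ ξ, vsS (t + 1) ((if x < s t then S t else x) - ξ) ∂(ν t))
    (A : ℕ → ℝ → ℝ)
    (hA : ∀ t, 1 ≤ t → t < T → ∀ x, A t x =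
      (∫ ξ, V t (x - ξ) ∂(ν (t - 1)))
        - ∑' n : ℕ, V t (x - ((n : ℝ) - 1) * θ) * f (t - 1) ((n : ℤ) - 1))
    (eps : ℕ → ℝ → ℝ)
    (hepsT1 : ∀ x, eps (T - 1) x = 0)
    (heps : ∀ t, t + 2 ≤ T → ∀ x, eps t x =
      if x < s t then α * A (t + 1) (S t) + α * ∫ ξ, eps (t + 1) (S t - ξ) ∂(ν t)
      else α * A (t + 1) x + α * ∫ ξ, eps (t + 1) (x - ξ) ∂(ν t))
    :
    ∀ t, t < T → ∀ x, vsS t x = V t x - c t * x + eps t x :=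
  stmt6_general T α K ν hprob hpos F hF C hCconv θ hθ f hf s S H V hHT1 hV hHrec c G hDint hCdef vsS
    hvsST hvsSRec A hA eps hepsT1 heps
end

section
/- For every t = 0,…,T−1 and every x ∈ ℝ, one has 0 ≤ v^{s,S}_t(x) − v_t(x) = V_t(x) − V*_t(x) + ε_t(x), where v_t(x) := V*_t(x) − c_t·x. -/
/-!
Shifted by the linear term, the cost `u_t(x) = v^{s,S}_t(x) + c_t x` of the `(s, S)` policy
satisfies the recursion `u_t(x) = K_t 1{x < s_t} + C_t(y) + α E[u_{t+1}(y - D_t)]`, where `y` is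
the level after ordering. The functions `V_t + ε_t` satisfy the same recursion: `ε_t` is built so
that the error `A_{t+1}` exactly compensates the replacement of `E[V_{t+1}(y - D_t)]` by its lattice
sum in `H_t`. Hence `u_t = V_t + ε_t`. On the other hand `V*_t` is the infimum over all order-up-to
levels of the same one-step cost with `V*_{t+1}` in place of `u_{t+1}`, so backward induction gives
`V*_t ≤ u_t`.

All expectations involved are of functions that are measurable and bounded on every ray `(-∞, M]`;
since `D_t ≥ 0` these are integrable after the shift `ξ ↦ y - ξ`.
-/

open MeasureTheory Set

def BddOnIic (g : ℝ → ℝ) : Prop := ∀ M, ∃ B, ∀ z ≤ M, |g z| ≤ B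

namespace BddOnIic

variable {g h : ℝ → ℝ}

lemma const (c : ℝ) : BddOnIic fun _ => c := fun _ => ⟨|c|, fun _ _ => le_rfl⟩

lemma add (hg : BddOnIic g) (hh : BddOnIic h) : BddOnIic fun z => g z + h z := by
  intro M
  obtain ⟨B, hB⟩ := hg M
  obtain ⟨B', hB'⟩ := hh M
  exact ⟨B + B', fun z hz => (abs_add_le _ _).trans (add_le_add (hB z hz) (hB' z hz))⟩

lemma sub (hg : BddOnIic g) (hh : BddOnIic h) : BddOnIic fun z => g z - h z := by
  intro M
  obtain ⟨B, hB⟩ := hg M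
  obtain ⟨B', hB'⟩ := hh M
  exact ⟨B + B', fun z hz => (abs_sub _ _).trans (add_le_add (hB z hz) (hB' z hz))⟩

lemma const_mul (hg : BddOnIic g) (a : ℝ) : BddOnIic fun z => a * g z := by
  intro M
  obtain ⟨B, hB⟩ := hg M
  refine ⟨|a| * B, fun z hz => ?_⟩
  rw [abs_mul]
  exact mul_le_mul_of_nonneg_left (hB z hz) (abs_nonneg a)

lemma of_bddBelow (hL : BddBelow (range g)) (hU : ∀ M, ∃ B, ∀ z ≤ M, g z ≤ B) : BddOnIic g := by
  obtain ⟨L, hL⟩ := hL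
  intro M
  obtain ⟨B, hB⟩ := hU M
  refine ⟨max (-L) B, fun z hz => abs_le.2 ⟨?_, (hB z hz).trans (le_max_right _ _)⟩⟩
  linarith [hL (mem_range_self z), le_max_left (-L) B]

lemma tsum_comp_sub_mul {d w : ℕ → ℝ} {b : ℝ} (hg : BddOnIic g) (hd : ∀ n, b ≤ d n)
    (hw0 : ∀ n, 0 ≤ w n) (hw : Summable w) : BddOnIic fun y => ∑' n, g (y - d n) * w n := by
  intro M
  obtain ⟨B, hB⟩ := hg (M - b)
  refine ⟨B * ∑' n, w n, fun y hy => ?_⟩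
  show ‖∑' n, g (y - d n) * w n‖ ≤ _
  refine tsum_of_norm_bounded (hw.hasSum.mul_left B) fun n => ?_
  rw [Real.norm_eq_abs, abs_mul, abs_of_nonneg (hw0 n)]
  exact mul_le_mul_of_nonneg_right (hB _ (by linarith [hd n])) (hw0 n)

end BddOnIic

lemma measurable_bddOnIic_tsum_comp_sub_mul {g : ℝ → ℝ} {w : ℕ → ℝ} {θ : ℝ} (hθ : 0 ≤ θ)
    (hm : Measurable g) (hg : BddOnIic g) (hw0 : ∀ n, 0 ≤ w n) (hw : Summable w) :
    Measurable (fun y => ∑' n : ℕ, g (y - ((n : ℝ) - 1) * θ) * w n) ∧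
      BddOnIic fun y => ∑' n : ℕ, g (y - ((n : ℝ) - 1) * θ) * w n :=
  ⟨Measurable.tsum fun n => (hm.comp (measurable_id.sub_const _)).mul_const _,
    hg.tsum_comp_sub_mul (b := -θ) (fun n => by nlinarith [(n.cast_nonneg : (0 : ℝ) ≤ n)]) hw0 hw⟩

lemma measurable_bddOnIic_ite_lt {a c : ℝ} {h : ℝ → ℝ} (hm : Measurable h)
    (hh : ∀ M, ∃ B, ∀ z ∈ Icc a M, |h z| ≤ B) :
    Measurable (fun z => if z < a then c else h z) ∧
      BddOnIic fun z => if z < a then c else h z := by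
  refine ⟨Measurable.ite measurableSet_Iio measurable_const hm, fun M => ?_⟩
  obtain ⟨B, hB⟩ := hh M
  refine ⟨max |c| B, fun z hz => ?_⟩
  dsimp only
  split_ifs with hza
  · exact le_max_left _ _
  · exact (hB z ⟨not_lt.1 hza, hz⟩).trans (le_max_right _ _)

lemma Continuous.exists_abs_add_le_on_Icc {C g : ℝ → ℝ} (hC : Continuous C) (hg : BddOnIic g)
    (a M : ℝ) : ∃ B, ∀ z ∈ Icc a M, |C z + g z| ≤ B := by
  obtain ⟨B, hB⟩ := (isCompact_Icc (a := a) (b := M)).exists_bound_of_continuousOn hC.continuousOn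
  obtain ⟨B', hB'⟩ := hg M
  exact ⟨B + B', fun z hz => (abs_add_le _ _).trans (add_le_add (hB z hz) (hB' z hz.2))⟩

section ShiftedIntegral

variable {ν : Measure ℝ} {g : ℝ → ℝ}

lemma integrable_comp_sub [IsFiniteMeasure ν] (hν : ∀ᵐ ξ ∂ν, 0 ≤ ξ) (hm : Measurable g)
    (hg : BddOnIic g) (x : ℝ) : Integrable (fun ξ => g (x - ξ)) ν := by
  obtain ⟨B, hB⟩ := hg x
  refine (integrable_const B).mono'
    (hm.comp (measurable_const.sub measurable_id)).aestronglyMeasurable ?_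
  filter_upwards [hν] with ξ hξ
  exact hB _ (by linarith)

lemma BddOnIic.integral_comp_sub [IsFiniteMeasure ν] (hν : ∀ᵐ ξ ∂ν, 0 ≤ ξ) (hg : BddOnIic g) :
    BddOnIic fun x => ∫ ξ, g (x - ξ) ∂ν := by
  intro M
  obtain ⟨B, hB⟩ := hg M
  refine ⟨B * ν.real univ, fun x hx => ?_⟩
  show ‖∫ ξ, g (x - ξ) ∂ν‖ ≤ _
  refine norm_integral_le_of_norm_le_const ?_
  filter_upwards [hν] with ξ hξ
  exact hB _ (by linarith)

lemma Measurable.integral_comp_sub [SFinite ν] (hm : Measurable g) :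
    Measurable fun x => ∫ ξ, g (x - ξ) ∂ν :=
  (hm.comp (measurable_fst.sub measurable_snd)).stronglyMeasurable.integral_prod_right'.measurable

lemma bddBelow_range_add_integral_comp_sub [IsProbabilityMeasure ν] (hν : ∀ᵐ ξ ∂ν, 0 ≤ ξ)
    {C : ℝ → ℝ} (hC : BddBelow (range C)) {α : ℝ} (hα : 0 ≤ α) (hm : Measurable g)
    (hg : BddOnIic g) (hgL : BddBelow (range g)) :
    BddBelow (range fun y => C y + α * ∫ ξ, g (y - ξ) ∂ν) := by
  obtain ⟨L, hL⟩ := hC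
  obtain ⟨L', hL'⟩ := hgL
  refine ⟨L + α * L', ?_⟩
  rintro _ ⟨y, rfl⟩
  have hint : L' ≤ ∫ ξ, g (y - ξ) ∂ν := by
    simpa using integral_mono (integrable_const L') (integrable_comp_sub hν hm hg y)
      fun ξ => hL' (mem_range_self _)
  have := mul_le_mul_of_nonneg_left hint hα
  linarith [hL (mem_range_self y)]

lemma add_mul_eq_of_cost_recursion [IsProbabilityMeasure ν] {v v' u G : ℝ → ℝ}
    {α a a' k x y : ℝ} (hD : Integrable (fun ξ => ξ) ν) (hu : ∀ z, v' z + a' * z = u z)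
    (hint : Integrable (fun ξ => u (y - ξ)) ν)
    (hv : v x = k + a * (y - x) + G y + α * ∫ ξ, v' (y - ξ) ∂ν) :
    v x + a * x = k + ((a - α * a') * y + G y + α * a' * ∫ ξ, ξ ∂ν) + α * ∫ ξ, u (y - ξ) ∂ν := by
  have hv' : (fun ξ => v' (y - ξ)) = fun ξ => u (y - ξ) - a' * y + a' * ξ :=
    funext fun ξ => by rw [← hu]; ring
  have hE : ∫ ξ, v' (y - ξ) ∂ν = ∫ ξ, u (y - ξ) ∂ν - a' * y + a' * ∫ ξ, ξ ∂ν := by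
    rw [hv', integral_add (f := fun ξ => u (y - ξ) - a' * y) (hint.sub (integrable_const _))
        (hD.const_mul a'),
      integral_sub hint (integrable_const _), integral_const, integral_const_mul]
    simp
  rw [hv, hE]
  ring

end ShiftedIntegral

lemma summable_sub_of_monotone {F : ℝ → ℝ} (hF : Monotone F) {B : ℝ} (hB : ∀ x, F x ≤ B)
    {a : ℕ → ℝ} (ha : Monotone a) : Summable fun n => F (a (n + 1)) - F (a n) := by
  refine summable_of_sum_range_le (c := B - F (a 0)) (fun n => sub_nonneg.2 (hF (ha n.le_succ)))
    fun n => ?_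
  rw [Finset.sum_range_sub (fun n => F (a n))]
  linarith [hB (a n)]

lemma cdf_increments_nonneg_summable {μ : Measure ℝ} [IsProbabilityMeasure μ] {F : ℝ → ℝ}
    (hF : ∀ x, F x = (μ (Iic x)).toReal) {θ : ℝ} (hθ : 0 ≤ θ) {f : ℤ → ℝ}
    (hf : ∀ n : ℤ, f n = F ((n + 1) * θ) - F (n * θ)) :
    (∀ n : ℕ, 0 ≤ f (n - 1)) ∧ Summable fun n : ℕ => f (n - 1) := by
  have hFcdf : F = ProbabilityTheory.cdf μ :=
    funext fun x => by rw [hF, ProbabilityTheory.cdf_eq_real, measureReal_def]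
  have ha : Monotone fun n : ℕ => ((n : ℝ) - 1) * θ := fun m n hmn => by
    have : (m : ℝ) ≤ n := by exact_mod_cast hmn
    nlinarith
  have hfa : ∀ n : ℕ, f (n - 1) = ProbabilityTheory.cdf μ ((((n + 1 : ℕ) : ℝ) - 1) * θ)
      - ProbabilityTheory.cdf μ (((n : ℝ) - 1) * θ) := fun n => by
    rw [hf, ← hFcdf]
    push_cast
    ring_nf
  exact ⟨fun n => (hfa n).symm ▸ sub_nonneg.2 ((ProbabilityTheory.cdf μ).mono (ha n.le_succ)),
    (summable_sub_of_monotone (ProbabilityTheory.cdf μ).mono (ProbabilityTheory.cdf_le_one μ)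
      ha).congr fun n => (hfa n).symm⟩

noncomputable def setupInf (K : ℝ) (H : ℝ → ℝ) (x : ℝ) : ℝ :=
  sInf ((fun y => K * (if x < y then (1 : ℝ) else 0) + H y) '' Ici x)

section SetupInf

variable {K : ℝ} {H : ℝ → ℝ}

lemma le_setupCost (hK : 0 ≤ K) {L : ℝ} (hL : ∀ y, L ≤ H y) (x y : ℝ) :
    L ≤ K * (if x < y then (1 : ℝ) else 0) + H y := by
  have : 0 ≤ K * (if x < y then (1 : ℝ) else 0) := mul_nonneg hK (by split_ifs <;> norm_num)
  linarith [hL y]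

lemma setupInf_le (hK : 0 ≤ K) (hH : BddBelow (range H)) {x y : ℝ} (hxy : x ≤ y) :
    setupInf K H x ≤ K * (if x < y then (1 : ℝ) else 0) + H y := by
  obtain ⟨L, hL⟩ := hH
  refine csInf_le ⟨L, ?_⟩ ⟨y, hxy, rfl⟩
  rintro _ ⟨z, -, rfl⟩
  exact le_setupCost hK (fun z => hL (mem_range_self z)) x z

lemma bddBelow_range_setupInf (hK : 0 ≤ K) (hH : BddBelow (range H)) :
    BddBelow (range (setupInf K H)) := by
  obtain ⟨L, hL⟩ := hH
  refine ⟨L, ?_⟩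
  rintro _ ⟨x, rfl⟩
  refine le_csInf (nonempty_Ici.image _) ?_
  rintro _ ⟨z, -, rfl⟩
  exact le_setupCost hK (fun z => hL (mem_range_self z)) x z

lemma bddOnIic_setupInf (hK : 0 ≤ K) (hH : BddBelow (range H)) : BddOnIic (setupInf K H) := by
  refine .of_bddBelow (bddBelow_range_setupInf hK hH) fun M => ⟨K + H M, fun z hz => ?_⟩
  have : K * (if z < M then (1 : ℝ) else 0) ≤ K :=
    mul_le_of_le_one_right hK (by split_ifs <;> norm_num)
  linarith [setupInf_le hK hH hz]

lemma setupInf_eq_min (hH : BddBelow (range H)) (x : ℝ) :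
    setupInf K H x = min (H x) (sInf ((fun y => K + H y) '' Ioi x)) := by
  obtain ⟨L, hL⟩ := hH
  have hbdd : BddBelow ((fun y => K + H y) '' Ioi x) := by
    refine ⟨K + L, ?_⟩
    rintro _ ⟨y, -, rfl⟩
    linarith [hL (mem_range_self y)]
  have him : (fun y => K * (if x < y then (1 : ℝ) else 0) + H y) '' Ici x
      = insert (H x) ((fun y => K + H y) '' Ioi x) := by
    rw [← Ioi_insert, image_insert_eq, if_neg (lt_irrefl x), mul_zero, zero_add]
    congr 1
    exact image_congr fun y hy => by rw [if_pos (mem_Ioi.1 hy), mul_one]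
  rw [setupInf, him, csInf_insert hbdd (nonempty_Ioi.image _)]

lemma measurable_setupInf (hH : BddBelow (range H)) (hm : Measurable H) :
    Measurable (setupInf K H) := by
  have hmono : Monotone fun x => sInf ((fun y => K + H y) '' Ioi x) := by
    intro a b hab
    obtain ⟨L, hL⟩ := hH
    refine csInf_le_csInf ⟨K + L, ?_⟩ (nonempty_Ioi.image _) (image_mono (Ioi_subset_Ioi hab))
    rintro _ ⟨y, -, rfl⟩
    linarith [hL (mem_range_self y)]
  rw [funext (setupInf_eq_min hH)]
  exact hm.min hmono.measurable

end SetupInf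

section Setting

variable {T : ℕ} {α θ : ℝ} {ν : ℕ → Measure ℝ} [∀ t, IsProbabilityMeasure (ν t)]

theorem measurable_bddOnIic_V (hθ : 0 ≤ θ) {C H V : ℕ → ℝ → ℝ} {s S K : ℕ → ℝ}
    {w : ℕ → ℕ → ℝ} (hw0 : ∀ t n, 0 ≤ w t n) (hw : ∀ t, Summable (w t))
    (hC : ∀ t < T, Continuous (C t)) (hHT1 : ∀ y, H (T - 1) y = C (T - 1) y)
    (hV : ∀ t < T, ∀ y, V t y = if y < s t then H t (S t) + K t else H t y)
    (hHrec : ∀ t, t + 2 ≤ T → ∀ y,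
      H t y = C t y + α * ∑' n : ℕ, V (t + 1) (y - ((n : ℝ) - 1) * θ) * w t n) :
    ∀ t < T, Measurable (V t) ∧ BddOnIic (V t) := by
  suffices hH : ∀ t < T, Measurable (H t) ∧ ∀ a M, ∃ B, ∀ z ∈ Icc a M, |H t z| ≤ B by
    intro t ht
    rw [funext (hV t ht)]
    exact measurable_bddOnIic_ite_lt (hH t ht).1 ((hH t ht).2 (s t))
  refine fun t ht => Nat.decreasingInduction (n := T - 1)
    (motive := fun t _ => Measurable (H t) ∧ ∀ a M, ∃ B, ∀ z ∈ Icc a M, |H t z| ≤ B)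
    (fun t ht' ih => ?_) ?_ (Nat.le_sub_one_of_lt ht)
  · obtain ⟨hVm, hVb⟩ : Measurable (V (t + 1)) ∧ BddOnIic (V (t + 1)) := by
      rw [funext (hV (t + 1) (by omega))]
      exact measurable_bddOnIic_ite_lt ih.1 (ih.2 (s (t + 1)))
    obtain ⟨hLm, hLb⟩ := measurable_bddOnIic_tsum_comp_sub_mul hθ hVm hVb (hw0 t) (hw t)
    rw [funext (hHrec t (by omega))]
    exact ⟨(hC t (by omega)).measurable.add (hLm.const_mul α),
      (hC t (by omega)).exists_abs_add_le_on_Icc (hLb.const_mul α)⟩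
  · rw [funext hHT1]
    exact ⟨(hC _ (by omega)).measurable, fun a M =>
      (isCompact_Icc (a := a) (b := M)).exists_bound_of_continuousOn (hC _ (by omega)).continuousOn⟩

theorem measurable_bddOnIic_eps (hθ : 0 ≤ θ) (hν : ∀ t, ∀ᵐ ξ ∂ν t, 0 ≤ ξ)
    {V A eps : ℕ → ℝ → ℝ} {s S : ℕ → ℝ} {w : ℕ → ℕ → ℝ} (hw0 : ∀ t n, 0 ≤ w t n)
    (hw : ∀ t, Summable (w t)) (hVreg : ∀ t < T, Measurable (V t) ∧ BddOnIic (V t))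
    (hA : ∀ t, 1 ≤ t → t < T → ∀ x, A t x = (∫ ξ, V t (x - ξ) ∂(ν (t - 1)))
      - ∑' n : ℕ, V t (x - ((n : ℝ) - 1) * θ) * w (t - 1) n)
    (hepsT1 : ∀ x, eps (T - 1) x = 0)
    (heps : ∀ t, t + 2 ≤ T → ∀ x, eps t x =
      if x < s t then α * A (t + 1) (S t) + α * ∫ ξ, eps (t + 1) (S t - ξ) ∂(ν t)
      else α * A (t + 1) x + α * ∫ ξ, eps (t + 1) (x - ξ) ∂(ν t)) :
    ∀ t < T, Measurable (eps t) ∧ BddOnIic (eps t) := by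
  refine fun t ht => Nat.decreasingInduction (n := T - 1)
    (motive := fun t _ => Measurable (eps t) ∧ BddOnIic (eps t))
    (fun t ht' ⟨hem, heb⟩ => ?_) ?_ (Nat.le_sub_one_of_lt ht)
  · obtain ⟨hVm, hVb⟩ := hVreg (t + 1) (by omega)
    have hAt : A (t + 1) = fun x => (∫ ξ, V (t + 1) (x - ξ) ∂(ν t))
        - ∑' n : ℕ, V (t + 1) (x - ((n : ℝ) - 1) * θ) * w t n :=
      funext fun x => by simpa using hA (t + 1) (by omega) (by omega) x
    obtain ⟨hLm, hLb⟩ := measurable_bddOnIic_tsum_comp_sub_mul hθ hVm hVb (hw0 t) (hw t)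
    have hAm : Measurable (A (t + 1)) := hAt ▸ hVm.integral_comp_sub.sub hLm
    have hAb : BddOnIic (A (t + 1)) := hAt ▸ (hVb.integral_comp_sub (hν t)).sub hLb
    have hb : BddOnIic fun x => α * A (t + 1) x + α * ∫ ξ, eps (t + 1) (x - ξ) ∂(ν t) :=
      (hAb.const_mul α).add ((heb.integral_comp_sub (hν t)).const_mul α)
    rw [funext (heps t (by omega))]
    exact measurable_bddOnIic_ite_lt ((hAm.const_mul α).add (hem.integral_comp_sub.const_mul α))
      fun M => (hb M).imp fun B hB z hz => hB z hz.2
  · rw [funext hepsT1]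
    exact ⟨measurable_const, .const 0⟩

theorem s_le_S {H : ℕ → ℝ → ℝ} {K s S Ibar : ℕ → ℝ} (hK0 : ∀ t < T, 0 ≤ K t)
    (hsST1 : s (T - 1) ≤ S (T - 1))
    (hsdef0 : ∀ t, t + 2 ≤ T → K t = 0 → s t = S t)
    (hsdef1 : ∀ t, t + 2 ≤ T → 0 < K t →
      IsLeast {w | (∃ m : ℤ, w = (m : ℝ) * θ) ∧ Ibar t ≤ w ∧ w ≤ S t ∧ H t w ≤ H t (S t) + K t}
        (s t)) :
    ∀ t < T, s t ≤ S t := by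
  intro t ht
  by_cases h2 : t + 2 ≤ T
  · rcases (hK0 t ht).eq_or_lt with h0 | h0
    · exact (hsdef0 t h2 h0.symm).le
    · exact (hsdef1 t h2 h0).1.2.2.1
  · obtain rfl : t = T - 1 := by omega
    exact hsST1

section Policy

variable {c : ℕ → ℝ} {C G : ℕ → ℝ → ℝ} {vsS : ℕ → ℝ → ℝ} {s S K : ℕ → ℝ}

theorem vsS_add_mul_eq (hν : ∀ t, ∀ᵐ ξ ∂ν t, 0 ≤ ξ)
    (hD : ∀ t < T, Integrable (fun ξ : ℝ => ξ) (ν t))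
    (hCdef : ∀ t < T, ∀ y,
      C t y = (c t - α * c (t + 1)) * y + G t y + α * c (t + 1) * ∫ ξ, ξ ∂(ν t))
    (hvsSRec : ∀ t < T, ∀ x, vsS t x =
      (if x < s t then K t else 0)
        + c t * ((if x < s t then S t else x) - x)
        + G t (if x < s t then S t else x)
        + α * ∫ ξ, vsS (t + 1) ((if x < s t then S t else x) - ξ) ∂(ν t))
    {t : ℕ} (ht : t < T) {u : ℝ → ℝ} (hu : ∀ z, vsS (t + 1) z + c (t + 1) * z = u z)
    (hum : Measurable u) (hub : BddOnIic u) (x : ℝ) :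
    vsS t x + c t * x = (if x < s t then K t else 0) + C t (if x < s t then S t else x)
      + α * ∫ ξ, u ((if x < s t then S t else x) - ξ) ∂(ν t) := by
  rw [hCdef t ht]
  exact add_mul_eq_of_cost_recursion (hD t ht) hu (integrable_comp_sub (hν t) hum hub _)
    (hvsSRec t ht x)

theorem vsS_add_mul_eq_V_add_eps (hν : ∀ t, ∀ᵐ ξ ∂ν t, 0 ≤ ξ)
    (hD : ∀ t < T, Integrable (fun ξ : ℝ => ξ) (ν t))
    (hCdef : ∀ t < T, ∀ y,
      C t y = (c t - α * c (t + 1)) * y + G t y + α * c (t + 1) * ∫ ξ, ξ ∂(ν t))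
    (hvsST : ∀ x, vsS T x = -(c T) * x)
    (hvsSRec : ∀ t < T, ∀ x, vsS t x =
      (if x < s t then K t else 0)
        + c t * ((if x < s t then S t else x) - x)
        + G t (if x < s t then S t else x)
        + α * ∫ ξ, vsS (t + 1) ((if x < s t then S t else x) - ξ) ∂(ν t))
    {H V A eps : ℕ → ℝ → ℝ} {w : ℕ → ℕ → ℝ}
    (hHT1 : ∀ y, H (T - 1) y = C (T - 1) y)
    (hV : ∀ t < T, ∀ y, V t y = if y < s t then H t (S t) + K t else H t y)
    (hHrec : ∀ t, t + 2 ≤ T → ∀ y,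
      H t y = C t y + α * ∑' n : ℕ, V (t + 1) (y - ((n : ℝ) - 1) * θ) * w t n)
    (hA : ∀ t, 1 ≤ t → t < T → ∀ x, A t x = (∫ ξ, V t (x - ξ) ∂(ν (t - 1)))
      - ∑' n : ℕ, V t (x - ((n : ℝ) - 1) * θ) * w (t - 1) n)
    (hepsT1 : ∀ x, eps (T - 1) x = 0)
    (heps : ∀ t, t + 2 ≤ T → ∀ x, eps t x =
      if x < s t then α * A (t + 1) (S t) + α * ∫ ξ, eps (t + 1) (S t - ξ) ∂(ν t)
      else α * A (t + 1) x + α * ∫ ξ, eps (t + 1) (x - ξ) ∂(ν t))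
    (hVreg : ∀ t < T, Measurable (V t) ∧ BddOnIic (V t))
    (hepsreg : ∀ t < T, Measurable (eps t) ∧ BddOnIic (eps t)) :
    ∀ t < T, ∀ x, vsS t x + c t * x = V t x + eps t x := by
  refine fun t ht => Nat.decreasingInduction (n := T - 1)
    (motive := fun t _ => ∀ x, vsS t x + c t * x = V t x + eps t x)
    (fun t ht' ih x => ?_) (fun x => ?_) (Nat.le_sub_one_of_lt ht)
  · obtain ⟨hVm, hVb⟩ := hVreg (t + 1) (by omega)
    obtain ⟨hem, heb⟩ := hepsreg (t + 1) (by omega)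
    rw [vsS_add_mul_eq hν hD hCdef hvsSRec (by omega) ih (hVm.add hem) (hVb.add heb), integral_add
      (integrable_comp_sub (hν t) hVm hVb _) (integrable_comp_sub (hν t) hem heb _),
      hV t (by omega), heps t (by omega)]
    have hA' := fun y => hA (t + 1) (by omega) (by omega) y
    simp only [add_tsub_cancel_right] at hA'
    by_cases hx : x < s t
    · simp only [hx, if_true, hHrec t (by omega), hA']
      ring
    · simp only [hx, if_false, hHrec t (by omega), hA']
      ring
  · have hT : T - 1 + 1 = T := by omega
    have hu : ∀ z, vsS (T - 1 + 1) z + c (T - 1 + 1) * z = 0 := fun z => by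
      rw [hT, hvsST]
      ring
    rw [vsS_add_mul_eq hν hD hCdef hvsSRec (by omega) hu measurable_const (.const 0),
      hV _ (by omega), hepsT1]
    by_cases hx : x < s (T - 1) <;> simp [hx, hHT1, add_comm]

theorem measurable_bddOnIic_vsS_add_mul {V eps : ℕ → ℝ → ℝ} (hvsST : ∀ x, vsS T x = -(c T) * x)
    (hcost : ∀ t < T, ∀ x, vsS t x + c t * x = V t x + eps t x)
    (hVreg : ∀ t < T, Measurable (V t) ∧ BddOnIic (V t))
    (hepsreg : ∀ t < T, Measurable (eps t) ∧ BddOnIic (eps t)) :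
    ∀ t ≤ T, Measurable (fun z => vsS t z + c t * z) ∧ BddOnIic fun z => vsS t z + c t * z := by
  intro t ht
  rcases ht.lt_or_eq with ht | rfl
  · rw [funext (hcost t ht)]
    exact ⟨(hVreg t ht).1.add (hepsreg t ht).1, (hVreg t ht).2.add (hepsreg t ht).2⟩
  · rw [show (fun z => vsS t z + c t * z) = fun _ => 0 from funext fun z => by rw [hvsST]; ring]
    exact ⟨measurable_const, .const 0⟩

theorem measurable_bddOnIic_Vstar (hα : 0 ≤ α) (hν : ∀ t, ∀ᵐ ξ ∂ν t, 0 ≤ ξ)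
    {Hstar Vstar : ℕ → ℝ → ℝ} (hK0 : ∀ t < T, 0 ≤ K t) (hC : ∀ t < T, Continuous (C t))
    (hCb : ∀ t < T, BddBelow (range (C t))) (hVstarT : ∀ x, Vstar T x = 0)
    (hHstar : ∀ t < T, ∀ y, Hstar t y = C t y + α * ∫ ξ, Vstar (t + 1) (y - ξ) ∂(ν t))
    (hVstar : ∀ t < T, ∀ x, Vstar t x = setupInf (K t) (Hstar t) x) :
    ∀ t ≤ T, (Measurable (Vstar t) ∧ BddOnIic (Vstar t)) ∧ BddBelow (range (Vstar t)) := by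
  refine fun t ht => Nat.decreasingInduction
    (motive := fun t _ => (Measurable (Vstar t) ∧ BddOnIic (Vstar t)) ∧ BddBelow (range (Vstar t)))
    (fun t ht' ⟨⟨hm, hb⟩, hL⟩ => ?_) ?_ ht
  · have hHb : BddBelow (range (Hstar t)) := by
      rw [funext (hHstar t ht')]
      exact bddBelow_range_add_integral_comp_sub (hν t) (hCb t ht') hα hm hb hL
    have hHm : Measurable (Hstar t) := by
      rw [funext (hHstar t ht')]
      exact (hC t ht').measurable.add (hm.integral_comp_sub.const_mul α)
    rw [funext (hVstar t ht')]
    exact ⟨⟨measurable_setupInf hHb hHm, bddOnIic_setupInf (hK0 t ht') hHb⟩,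
      bddBelow_range_setupInf (hK0 t ht') hHb⟩
  · rw [funext hVstarT]
    exact ⟨⟨measurable_const, .const 0⟩, ⟨0, by rintro _ ⟨_, rfl⟩; rfl⟩⟩

theorem Vstar_le_vsS_add_mul (hα : 0 ≤ α) (hν : ∀ t, ∀ᵐ ξ ∂ν t, 0 ≤ ξ)
    (hD : ∀ t < T, Integrable (fun ξ : ℝ => ξ) (ν t))
    (hCdef : ∀ t < T, ∀ y,
      C t y = (c t - α * c (t + 1)) * y + G t y + α * c (t + 1) * ∫ ξ, ξ ∂(ν t))
    (hvsST : ∀ x, vsS T x = -(c T) * x)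
    (hvsSRec : ∀ t < T, ∀ x, vsS t x =
      (if x < s t then K t else 0)
        + c t * ((if x < s t then S t else x) - x)
        + G t (if x < s t then S t else x)
        + α * ∫ ξ, vsS (t + 1) ((if x < s t then S t else x) - ξ) ∂(ν t))
    (hsS : ∀ t < T, s t ≤ S t) {Hstar Vstar : ℕ → ℝ → ℝ} (hK0 : ∀ t < T, 0 ≤ K t)
    (hCb : ∀ t < T, BddBelow (range (C t))) (hVstarT : ∀ x, Vstar T x = 0)
    (hHstar : ∀ t < T, ∀ y, Hstar t y = C t y + α * ∫ ξ, Vstar (t + 1) (y - ξ) ∂(ν t))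
    (hVstar : ∀ t < T, ∀ x, Vstar t x = setupInf (K t) (Hstar t) x)
    (hVstarReg : ∀ t ≤ T,
      (Measurable (Vstar t) ∧ BddOnIic (Vstar t)) ∧ BddBelow (range (Vstar t)))
    (hureg : ∀ t ≤ T,
      Measurable (fun z => vsS t z + c t * z) ∧ BddOnIic fun z => vsS t z + c t * z) :
    ∀ t ≤ T, ∀ x, Vstar t x ≤ vsS t x + c t * x := by
  refine fun t ht => Nat.decreasingInduction
    (motive := fun t _ => ∀ x, Vstar t x ≤ vsS t x + c t * x) (fun t ht' ih x => ?_) ?_ ht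
  · obtain ⟨⟨hm, hb⟩, hL⟩ := hVstarReg (t + 1) ht'
    obtain ⟨hum, hub⟩ := hureg (t + 1) ht'
    have hHb : BddBelow (range (Hstar t)) := by
      rw [funext (hHstar t ht')]
      exact bddBelow_range_add_integral_comp_sub (hν t) (hCb t ht') hα hm hb hL
    rw [vsS_add_mul_eq hν hD hCdef hvsSRec ht' (fun z => rfl) hum hub, hVstar t ht']
    set y := if x < s t then S t else x with hy
    obtain ⟨hxy, hk⟩ :
        x ≤ y ∧ K t * (if x < y then (1 : ℝ) else 0) = if x < s t then K t else 0 := by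
      by_cases hx : x < s t
      · have hxS : x < S t := hx.trans_le (hsS t ht')
        simp [hy, hx, hxS, hxS.le]
      · simp [hy, hx]
    calc setupInf (K t) (Hstar t) x ≤ K t * (if x < y then (1 : ℝ) else 0) + Hstar t y :=
          setupInf_le (hK0 t ht') hHb hxy
      _ = (if x < s t then K t else 0) + C t y + α * ∫ ξ, Vstar (t + 1) (y - ξ) ∂(ν t) := by
          rw [hk, hHstar t ht', add_assoc]
      _ ≤ _ := add_le_add_right (mul_le_mul_of_nonneg_left (integral_mono
          (integrable_comp_sub (hν t) hm hb _) (integrable_comp_sub (hν t) hum hub _)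
          fun ξ => ih _) hα) _
  · intro x
    rw [hVstarT, hvsST]
    linarith

end Policy

end Setting

theorem stmt7_general
    (T : ℕ)
    (α : ℝ) (hα0 : 0 < α)
    (K : ℕ → ℝ) (hK0 : ∀ t, t < T → 0 ≤ K t)
    (ν : ℕ → MeasureTheory.Measure ℝ)
    (hprob : ∀ t, MeasureTheory.IsProbabilityMeasure (ν t))
    (hpos : ∀ t, ν t (Set.Iio 0) = 0)
    (F : ℕ → ℝ → ℝ) (hF : ∀ t x, F t x = (ν t (Set.Iic x)).toReal)
    (C : ℕ → ℝ → ℝ)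
    (hCconv : ∀ t, t < T → ConvexOn ℝ Set.univ (C t))
    (Hstar Vstar : ℕ → ℝ → ℝ)
    (hVstarT : ∀ x, Vstar T x = 0)
    (hHstar : ∀ t, t < T → ∀ y,
      Hstar t y = C t y + α * ∫ ξ, Vstar (t + 1) (y - ξ) ∂(ν t))
    (hVstar : ∀ t, t < T → ∀ x,
      Vstar t x = sInf ((fun y => K t * (if x < y then (1 : ℝ) else 0) + Hstar t y) '' Set.Ici x))
    (θ : ℝ) (hθ : 0 < θ)
    (f : ℕ → ℤ → ℝ)
    (hf : ∀ t (n : ℤ), f t n = F t (((n : ℝ) + 1) * θ) - F t ((n : ℝ) * θ))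
    (Cm : ℕ → ℝ)
    (hCm : ∀ t, t < T → IsLeast {x | ∀ y, C t x ≤ C t y} (Cm t))
    (s S : ℕ → ℝ) (Ibar : ℕ → ℝ)
    (hsT1a : s (T - 1) ≤ Cm (T - 1))
    (H V : ℕ → ℝ → ℝ)
    (hHT1 : ∀ y, H (T - 1) y = C (T - 1) y)
    (hST1 : S (T - 1) = Cm (T - 1))
    (hV : ∀ t, t < T → ∀ y, V t y = if y < s t then H t (S t) + K t else H t y)
    (hHrec : ∀ t, t + 2 ≤ T → ∀ y,
      H t y = C t y + α * ∑' n : ℕ, V (t + 1) (y - ((n : ℝ) - 1) * θ) * f t ((n : ℤ) - 1))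
    (hsdef0 : ∀ t, t + 2 ≤ T → K t = 0 → s t = S t)
    (hsdef1 : ∀ t, t + 2 ≤ T → 0 < K t →
      IsLeast {w | (∃ m : ℤ, w = (m : ℝ) * θ) ∧ Ibar t ≤ w ∧ w ≤ S t ∧ H t w ≤ H t (S t) + K t} (s t))
    (c : ℕ → ℝ) (G : ℕ → ℝ → ℝ)
    (hDint : ∀ t, t < T → MeasureTheory.Integrable (fun ξ : ℝ => ξ) (ν t))
    (hCdef : ∀ t, t < T → ∀ y,
      C t y = (c t - α * c (t + 1)) * y + G t y + α * c (t + 1) * ∫ ξ, ξ ∂(ν t))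
    (vsS : ℕ → ℝ → ℝ)
    (hvsST : ∀ x, vsS T x = -(c T) * x)
    (hvsSRec : ∀ t, t < T → ∀ x, vsS t x =
      (if x < s t then K t else 0)
        + c t * ((if x < s t then S t else x) - x)
        + G t (if x < s t then S t else x)
        + α * ∫ ξ, vsS (t + 1) ((if x < s t then S t else x) - ξ) ∂(ν t))
    (A : ℕ → ℝ → ℝ)
    (hA : ∀ t, 1 ≤ t → t < T → ∀ x, A t x =
      (∫ ξ, V t (x - ξ) ∂(ν (t - 1)))
        - ∑' n : ℕ, V t (x - ((n : ℝ) - 1) * θ) * f (t - 1) ((n : ℤ) - 1))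
    (eps : ℕ → ℝ → ℝ)
    (hepsT1 : ∀ x, eps (T - 1) x = 0)
    (heps : ∀ t, t + 2 ≤ T → ∀ x, eps t x =
      if x < s t then α * A (t + 1) (S t) + α * ∫ ξ, eps (t + 1) (S t - ξ) ∂(ν t)
      else α * A (t + 1) x + α * ∫ ξ, eps (t + 1) (x - ξ) ∂(ν t))
    :
    ∀ t, t < T → ∀ x,
      0 ≤ vsS t x - (Vstar t x - c t * x) ∧
      vsS t x - (Vstar t x - c t * x) = V t x - Vstar t x + eps t x := by
  have := hprob
  have hν : ∀ t, ∀ᵐ ξ ∂ν t, 0 ≤ ξ := fun t => by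
    simp only [ae_iff, not_le]
    exact hpos t
  have hC : ∀ t < T, Continuous (C t) := fun t ht =>
    continuousOn_univ.1 ((hCconv t ht).continuousOn isOpen_univ)
  have hCb : ∀ t < T, BddBelow (range (C t)) := fun t ht =>
    ⟨C t (Cm t), by rintro _ ⟨y, rfl⟩; exact (hCm t ht).1 y⟩
  have hw := fun t => cdf_increments_nonneg_summable (hF t) hθ.le (hf t)
  have hVreg := measurable_bddOnIic_V (w := fun t (n : ℕ) => f t (n - 1)) hθ.le
    (fun t => (hw t).1) (fun t => (hw t).2) hC hHT1 hV hHrec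
  have hepsreg := measurable_bddOnIic_eps (w := fun t (n : ℕ) => f t (n - 1)) hθ.le hν
    (fun t => (hw t).1) (fun t => (hw t).2) hVreg hA hepsT1 heps
  have hcost := vsS_add_mul_eq_V_add_eps (w := fun t (n : ℕ) => f t (n - 1)) hν hDint hCdef hvsST
    hvsSRec hHT1 hV hHrec hA hepsT1 heps hVreg hepsreg
  have hopt := Vstar_le_vsS_add_mul hα0.le hν hDint hCdef hvsST hvsSRec
    (s_le_S hK0 (hST1 ▸ hsT1a) hsdef0 hsdef1) hK0 hCb hVstarT hHstar hVstar
    (measurable_bddOnIic_Vstar hα0.le hν hK0 hC hCb hVstarT hHstar hVstar)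
    (measurable_bddOnIic_vsS_add_mul hvsST hcost hVreg hepsreg)
  intro t ht x
  exact ⟨by linarith [hopt t ht.le x], by linarith [hcost t ht x]⟩

theorem stmt7
    (T : ℕ) (hT : 2 ≤ T)
    (α : ℝ) (hα0 : 0 < α) (hα1 : α ≤ 1)
    (K : ℕ → ℝ) (hK0 : ∀ t, t < T → 0 ≤ K t)
    (hKmono : ∀ t, t + 2 ≤ T → α * K (t + 1) ≤ K t)
    (ν : ℕ → MeasureTheory.Measure ℝ)
    (hprob : ∀ t, MeasureTheory.IsProbabilityMeasure (ν t))
    (hpos : ∀ t, ν t (Set.Iio 0) = 0)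
    (F : ℕ → ℝ → ℝ) (hF : ∀ t x, F t x = (ν t (Set.Iic x)).toReal)
    (C : ℕ → ℝ → ℝ)
    (hCconv : ∀ t, t < T → ConvexOn ℝ Set.univ (C t))
    (hCcoer : ∀ t, t < T → Filter.Tendsto (C t) (Filter.cocompact ℝ) Filter.atTop)
    (Hstar Vstar : ℕ → ℝ → ℝ)
    (hVstarT : ∀ x, Vstar T x = 0)
    (hHstar : ∀ t, t < T → ∀ y,
      Hstar t y = C t y + α * ∫ ξ, Vstar (t + 1) (y - ξ) ∂(ν t))
    (hVstar : ∀ t, t < T → ∀ x,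
      Vstar t x = sInf ((fun y => K t * (if x < y then (1 : ℝ) else 0) + Hstar t y) '' Set.Ici x))
    (θ : ℝ) (hθ : 0 < θ)
    (f : ℕ → ℤ → ℝ)
    (hf : ∀ t (n : ℤ), f t n = F t (((n : ℝ) + 1) * θ) - F t ((n : ℝ) * θ))
    (Cm SU : ℕ → ℝ)
    (hCm : ∀ t, t < T → IsLeast {x | ∀ y, C t x ≤ C t y} (Cm t))
    (hSU : ∀ t, t < T → ∀ n0 : ℤ, (n0 : ℝ) * θ < Cm t → Cm t ≤ ((n0 : ℝ) + 1) * θ →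
      IsLeast {w | (∃ m : ℤ, w = (m : ℝ) * θ) ∧ Cm t ≤ w ∧ C t ((n0 : ℝ) * θ) + K t < C t w} (SU t))
    (s S : ℕ → ℝ) (I Ibar : ℕ → ℝ)
    (hsT1a : s (T - 1) ≤ Cm (T - 1))
    (hsT1b : C (T - 1) (s (T - 1)) = C (T - 1) (Cm (T - 1)) + K (T - 1))
    (hIbarT1 : Ibar (T - 1) = s (T - 1))
    (hI : ∀ t, t + 2 ≤ T →
      IsGreatest {w | (∃ m : ℤ, w = (m : ℝ) * θ) ∧ w < min (Ibar (t + 1) - θ) (Cm t)} (I t))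
    (hIbar : ∀ t, t + 2 ≤ T →
      IsGreatest {w | (∃ m : ℤ, w = (m : ℝ) * θ) ∧ w ≤ I t ∧ C t (I t) + K t < C t w} (Ibar t - θ))
    (H V : ℕ → ℝ → ℝ)
    (hHT1 : ∀ y, H (T - 1) y = C (T - 1) y)
    (hST1 : S (T - 1) = Cm (T - 1))
    (hV : ∀ t, t < T → ∀ y, V t y = if y < s t then H t (S t) + K t else H t y)
    (hHrec : ∀ t, t + 2 ≤ T → ∀ y,
      H t y = C t y + α * ∑' n : ℕ, V (t + 1) (y - ((n : ℝ) - 1) * θ) * f t ((n : ℤ) - 1))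
    (hSdef : ∀ t, t + 2 ≤ T →
      IsGreatest {w | (∃ m : ℤ, w = (m : ℝ) * θ) ∧ I t ≤ w ∧ w ≤ SU t ∧
        ∀ u, (∃ n : ℤ, u = (n : ℝ) * θ) → I t ≤ u → u ≤ SU t → H t w ≤ H t u} (S t))
    (hsdef0 : ∀ t, t + 2 ≤ T → K t = 0 → s t = S t)
    (hsdef1 : ∀ t, t + 2 ≤ T → 0 < K t →
      IsLeast {w | (∃ m : ℤ, w = (m : ℝ) * θ) ∧ Ibar t ≤ w ∧ w ≤ S t ∧ H t w ≤ H t (S t) + K t} (s t))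
    (c : ℕ → ℝ) (G : ℕ → ℝ → ℝ)
    (hDint : ∀ t, t < T → MeasureTheory.Integrable (fun ξ : ℝ => ξ) (ν t))
    (hCdef : ∀ t, t < T → ∀ y,
      C t y = (c t - α * c (t + 1)) * y + G t y + α * c (t + 1) * ∫ ξ, ξ ∂(ν t))
    (vsS : ℕ → ℝ → ℝ)
    (hvsST : ∀ x, vsS T x = -(c T) * x)
    (hvsSRec : ∀ t, t < T → ∀ x, vsS t x =
      (if x < s t then K t else 0)
        + c t * ((if x < s t then S t else x) - x)
        + G t (if x < s t then S t else x)
        + α * ∫ ξ, vsS (t + 1) ((if x < s t then S t else x) - ξ) ∂(ν t))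
    (A : ℕ → ℝ → ℝ)
    (hA : ∀ t, 1 ≤ t → t < T → ∀ x, A t x =
      (∫ ξ, V t (x - ξ) ∂(ν (t - 1)))
        - ∑' n : ℕ, V t (x - ((n : ℝ) - 1) * θ) * f (t - 1) ((n : ℤ) - 1))
    (eps : ℕ → ℝ → ℝ)
    (hepsT1 : ∀ x, eps (T - 1) x = 0)
    (heps : ∀ t, t + 2 ≤ T → ∀ x, eps t x =
      if x < s t then α * A (t + 1) (S t) + α * ∫ ξ, eps (t + 1) (S t - ξ) ∂(ν t)
      else α * A (t + 1) x + α * ∫ ξ, eps (t + 1) (x - ξ) ∂(ν t))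
    :
    ∀ t, t < T → ∀ x,
      0 ≤ vsS t x - (Vstar t x - c t * x) ∧
      vsS t x - (Vstar t x - c t * x) = V t x - Vstar t x + eps t x :=
  stmt7_general T α hα0 K hK0 ν hprob hpos F hF C hCconv Hstar Vstar hVstarT hHstar hVstar θ hθ f hf
    Cm hCm s S Ibar hsT1a H V hHT1 hST1 hV hHrec hsdef0 hsdef1 c G hDint hCdef vsS hvsST hvsSRec A
    hA eps hepsT1 heps
end
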